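/- arXiv:1909.13864 — 9 statements merged into one kernel-verified Lean document; each statement's English description precedes it below -/
import Mathlib

section
/- Let n > 1 be an integer, F a division ring, G a division subring of F, and f_0 = 1, f_1, …, f_{n−1} a left G-basis of F. Suppose that for each 0 ≤ k < n−1 there exists e ∈ D_k with e ∉ S_k such that every x ∈ D_k can be written x = s + e·t with s, t ∈ S_k (i.e., D_k has right dimension 2 over S_k). Let φ : F → Mₙ(G) be the left regular representation with respect to this basis. Then φ is an injective ring homomorphism and φ is tight. -/
/-- `φ : F → Mₙ(α)` is `a`-tight: every possible upper-right `a × (n+1-a)` block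
(rows `1,…,a`, columns `a,…,n`, one-indexed) is realized by some element of `F`. -/
def ATight {n : ℕ} {F α : Type*} (φ : F → Matrix (Fin n) (Fin n) α) (a : ℕ) : Prop :=
  ∀ g : Matrix (Fin n) (Fin n) α, ∃ x : F, ∀ i j : Fin n,
    (i : ℕ) < a → a ≤ (j : ℕ) + 1 → φ x i j = g i j

/-- `L_k`: the left `G`-subspace of `F` spanned by `f_0, …, f_k`. -/
def Lset {F : Type*} [DivisionRing F] (G : Subring F) (f : ℕ → F) (k : ℕ) : Set F :=
  {x | ∃ c : ℕ → F, (∀ i, c i ∈ G) ∧ x = ∑ i ∈ Finset.range (k + 1), c i * f i}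

/-- `S_k = {a ∈ F : L_k · a ⊆ L_k}`. -/
def Sset {F : Type*} [DivisionRing F] (G : Subring F) (f : ℕ → F) (k : ℕ) : Set F :=
  {a | ∀ x ∈ Lset G f k, x * a ∈ Lset G f k}

/-- `D_0 = F`, and `D_k = {a ∈ F : L_{k-1} · a ⊆ L_k}` for `k ≥ 1`. -/
def Dset {F : Type*} [DivisionRing F] (G : Subring F) (f : ℕ → F) : ℕ → Set F
  | 0 => Set.univ
  | k + 1 => {a | ∀ x ∈ Lset G f k, x * a ∈ Lset G f (k + 1)}

/-!
Row `i` of `φ x` is the coordinate vector of `f_i · x`, so uniqueness of coordinates makes `φ` a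
ring embedding.

For tightness, the key fact is that `F = L_k + w·S_k` for every `w ∉ L_k` (when `k + 1 < n`).
Each `S_k` is a division ring, because right multiplication by a nonzero `s ∈ S_k` is injective,
hence surjective, on the finite-dimensional space `L_k`; so one decomposition `F = L_k + v·S_k`
can be traded for any `w ∉ L_k`. Such a `v` exists by induction: `F = L_k + f_{k+1}·S_k` and
`S_k ⊆ D_{k+1} = S_{k+1} + e·S_{k+1}` give `F = L_{k+1} + (f_{k+1} e)·S_{k+1}`.
Writing a target `τ = Σ v_j f_j` as `l + f_i t` with `l ∈ L_{i-1}` and `t ∈ S_{i-1}`, the rows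
of `φ t` above row `i` vanish beyond column `i - 1`, while row `i` agrees with `v` there; summing
such elements fills any upper-right block row by row.
-/

section

open Finset Submodule

variable {F : Type*} [DivisionRing F]

theorem Submodule.mul_inv_mem_of_forall_mul_mem {K : Subfield F} (V : Submodule K F)
    [FiniteDimensional K V] {s : F} (hs : s ≠ 0) (hV : ∀ x ∈ V, x * s ∈ V) {y : F}
    (hy : y ∈ V) : y * s⁻¹ ∈ V := by
  let ρ : F →ₗ[K] F :=
    { toFun := (· * s)
      map_add' := fun a b => add_mul a b s
      map_smul' := fun c a => smul_mul_assoc c a s }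
  have hinj : Function.Injective (ρ.restrict hV) := fun a b hab =>
    Subtype.ext (mul_right_cancel₀ hs (congrArg Subtype.val hab))
  obtain ⟨x, hx⟩ := LinearMap.injective_iff_surjective.1 hinj ⟨y, hy⟩
  have hxy : x * s = y := congrArg Subtype.val hx
  rw [← hxy, mul_inv_cancel_right₀ hs]
  exact x.2

theorem exists_eq_add_mul_of_notMem {L S : Set F} (hL : ∀ a ∈ L, ∀ b ∈ L, a - b ∈ L)
    (hSL : ∀ s ∈ S, ∀ l ∈ L, l * s ∈ L) (hS : ∀ s ∈ S, ∀ t ∈ S, s * t ∈ S)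
    (hS_inv : ∀ s ∈ S, s ≠ 0 → s⁻¹ ∈ S) {v w : F}
    (hv : ∀ x, ∃ l ∈ L, ∃ t ∈ S, x = l + v * t) (hw : w ∉ L) (x : F) :
    ∃ l ∈ L, ∃ t ∈ S, x = l + w * t := by
  obtain ⟨lw, hlw, u, hu, rfl⟩ := hv w
  have hu0 : u ≠ 0 := by
    rintro rfl
    exact hw (by simpa using hlw)
  obtain ⟨l, hl, t, ht, rfl⟩ := hv x
  have hut : u⁻¹ * t ∈ S := hS _ (hS_inv u hu hu0) t ht
  refine ⟨l - lw * (u⁻¹ * t), hL _ hl _ (hSL _ hut _ hlw), u⁻¹ * t, hut, ?_⟩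
  rw [add_mul, mul_assoc v, mul_inv_cancel_left₀ hu0]
  abel

section Filtration

theorem Lset_eq_span (K : Subfield F) (f : ℕ → F) (k : ℕ) :
    Lset K.toSubring f k = span K (Set.range fun i : Fin (k + 1) => f i) := by
  ext x
  rw [SetLike.mem_coe, mem_span_range_iff_exists_fun]
  constructor
  · rintro ⟨c, hc, rfl⟩
    exact ⟨fun i => ⟨c i, hc i⟩, Fin.sum_univ_eq_sum_range (fun i => c i * f i) _⟩
  · rintro ⟨c, rfl⟩
    refine ⟨fun m => if h : m < k + 1 then c ⟨m, h⟩ else 0, fun m => ?_, ?_⟩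
    · dsimp only
      split
      exacts [(c _).2, zero_mem _]
    · rw [← Fin.sum_univ_eq_sum_range]
      simp [Subfield.smul_def, Fin.is_le]

variable {K : Subfield F} {f : ℕ → F} {k : ℕ}

theorem Lset_mono {k' : ℕ} (h : k ≤ k') : Lset K.toSubring f k ⊆ Lset K.toSubring f k' := by
  simp only [Lset_eq_span]
  exact span_mono (Set.range_subset_iff.2 fun i => ⟨Fin.castLE (by omega) i, rfl⟩)

theorem f_mem_Lset {i : ℕ} (h : i ≤ k) : f i ∈ Lset K.toSubring f k := by
  rw [Lset_eq_span]
  exact subset_span ⟨⟨i, by omega⟩, rfl⟩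

theorem add_mem_Lset {a b : F} (ha : a ∈ Lset K.toSubring f k)
    (hb : b ∈ Lset K.toSubring f k) : a + b ∈ Lset K.toSubring f k := by
  rw [Lset_eq_span] at *
  exact add_mem ha hb

theorem sub_mem_Lset {a b : F} (ha : a ∈ Lset K.toSubring f k)
    (hb : b ∈ Lset K.toSubring f k) : a - b ∈ Lset K.toSubring f k := by
  rw [Lset_eq_span] at *
  exact sub_mem ha hb

theorem Sset_subset_Lset (hf0 : f 0 = 1) : Sset K.toSubring f k ⊆ Lset K.toSubring f k :=
  fun s hs => by simpa [hf0] using hs (f 0) (f_mem_Lset k.zero_le)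

theorem Sset_subset_Dset_succ : Sset K.toSubring f k ⊆ Dset K.toSubring f (k + 1) :=
  fun _ ht x hx => Lset_mono k.le_succ (ht x hx)

theorem mul_mem_Sset {s t : F} (hs : s ∈ Sset K.toSubring f k)
    (ht : t ∈ Sset K.toSubring f k) : s * t ∈ Sset K.toSubring f k :=
  fun x hx => by rw [← mul_assoc]; exact ht _ (hs _ hx)

theorem inv_mem_Sset {s : F} (hs : s ∈ Sset K.toSubring f k) (hs0 : s ≠ 0) :
    s⁻¹ ∈ Sset K.toSubring f k := by
  simp only [Sset, Lset_eq_span, SetLike.mem_coe] at hs ⊢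
  have := FiniteDimensional.span_of_finite K (Set.finite_range fun i : Fin (k + 1) => f i)
  exact fun x hx => mul_inv_mem_of_forall_mul_mem _ hs0 hs hx

theorem forall_eq_add_mul_Sset_of_notMem {v w : F}
    (hv : ∀ x, ∃ l ∈ Lset K.toSubring f k, ∃ t ∈ Sset K.toSubring f k, x = l + v * t)
    (hw : w ∉ Lset K.toSubring f k) (x : F) :
    ∃ l ∈ Lset K.toSubring f k, ∃ t ∈ Sset K.toSubring f k, x = l + w * t :=
  exists_eq_add_mul_of_notMem (fun _ ha _ hb => sub_mem_Lset ha hb) (fun _ hs => hs)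
    (fun _ hs _ ht => mul_mem_Sset hs ht) (fun _ hs hs0 => inv_mem_Sset hs hs0) hv hw x

variable {n : ℕ} (hf0 : f 0 = 1) (hnot : ∀ k, k + 1 < n → f (k + 1) ∉ Lset K.toSubring f k)
  (hD : ∀ k < n - 1, ∃ e ∈ Dset K.toSubring f k, e ∉ Sset K.toSubring f k ∧
    ∀ x ∈ Dset K.toSubring f k, ∃ s ∈ Sset K.toSubring f k, ∃ t ∈ Sset K.toSubring f k,
      x = s + e * t)
include hf0 hnot hD

theorem exists_forall_eq_add_mul_Sset : ∀ {k : ℕ}, k + 1 < n →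
    ∃ v : F, ∀ x, ∃ l ∈ Lset K.toSubring f k, ∃ t ∈ Sset K.toSubring f k, x = l + v * t
  | 0, hk => by
    obtain ⟨e, -, -, he⟩ := hD 0 (by omega)
    refine ⟨e, fun x => ?_⟩
    obtain ⟨s, hs, t, ht, rfl⟩ := he x trivial
    exact ⟨s, Sset_subset_Lset hf0 hs, t, ht, rfl⟩
  | k + 1, hk => by
    obtain ⟨v, hv⟩ := exists_forall_eq_add_mul_Sset (k := k) (by omega)
    obtain ⟨e, -, -, he⟩ := hD (k + 1) (by omega)
    refine ⟨f (k + 1) * e, fun x => ?_⟩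
    obtain ⟨l, hl, t, ht, rfl⟩ := forall_eq_add_mul_Sset_of_notMem hv (hnot k (by omega)) x
    obtain ⟨s, hs, u, hu, rfl⟩ := he t (Sset_subset_Dset_succ ht)
    refine ⟨l + f (k + 1) * s, add_mem_Lset (Lset_mono k.le_succ hl) (hs _ (f_mem_Lset le_rfl)),
      u, hu, ?_⟩
    noncomm_ring

theorem exists_eq_add_mul_of_notMem_Lset (hk : k + 1 < n) {w : F}
    (hw : w ∉ Lset K.toSubring f k) (x : F) :
    ∃ l ∈ Lset K.toSubring f k, ∃ t ∈ Sset K.toSubring f k, x = l + w * t := by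
  obtain ⟨_, hv⟩ := exists_forall_eq_add_mul_Sset hf0 hnot hD hk
  exact forall_eq_add_mul_Sset_of_notMem hv hw x

end Filtration

section RegularRepresentation

variable {G : Subring F} {f : ℕ → F} {n : ℕ} {φ : F → Matrix (Fin n) (Fin n) G}
  (hindep : ∀ c : ℕ → F, (∀ i, c i ∈ G) →
    ∑ i ∈ Finset.range n, c i * f i = 0 → ∀ i < n, c i = 0)
  (hφ : ∀ (x : F) (i : Fin n), f (i : ℕ) * x = ∑ j : Fin n, (φ x i j : F) * f (j : ℕ))

include hindep in
theorem eq_of_sum_mul_eq {c d : Fin n → G}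
    (h : ∑ j, (c j : F) * f j = ∑ j, (d j : F) * f j) : c = d := by
  funext j
  have hcd := hindep (fun m => if hm : m < n then (c ⟨m, hm⟩ - d ⟨m, hm⟩ : F) else 0)
    (fun m => by split; exacts [G.sub_mem (c _).2 (d _).2, G.zero_mem]) ?_ j j.2
  · simpa [sub_eq_zero] using hcd
  · rw [← Fin.sum_univ_eq_sum_range]
    simp [sub_mul, sum_sub_distrib, h]

include hindep hφ

theorem phi_eq_of_mul_eq {x : F} {i : Fin n} {c : Fin n → G}
    (h : f i * x = ∑ j, (c j : F) * f j) : φ x i = c :=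
  eq_of_sum_mul_eq hindep ((hφ x i).symm.trans h)

theorem phi_add (x y : F) : φ (x + y) = φ x + φ y := by
  funext i
  apply phi_eq_of_mul_eq hindep hφ
  rw [mul_add, hφ x i, hφ y i, ← sum_add_distrib]
  exact sum_congr rfl fun j _ => by simp [add_mul]

theorem phi_sub (x y : F) : φ (x - y) = φ x - φ y :=
  eq_sub_of_add_eq (by rw [← phi_add hindep hφ, sub_add_cancel])

theorem phi_one : φ 1 = 1 := by
  funext i
  apply phi_eq_of_mul_eq hindep hφ
  rw [mul_one]
  simp [Matrix.one_apply, apply_ite Subtype.val, ite_mul]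

theorem phi_mul (x y : F) : φ (x * y) = φ x * φ y := by
  funext i
  apply phi_eq_of_mul_eq hindep hφ
  rw [← mul_assoc, hφ x i, sum_mul]
  simp_rw [mul_assoc, hφ y, mul_sum, Matrix.mul_apply]
  push_cast
  rw [sum_comm]
  simp_rw [sum_mul, mul_assoc]

def phiRingHom : F →+* Matrix (Fin n) (Fin n) G :=
  RingHom.mk' ⟨⟨φ, phi_one hindep hφ⟩, phi_mul hindep hφ⟩ (phi_add hindep hφ)

variable [NeZero n] (hf0 : f 0 = 1)
include hf0

omit hindep in
theorem phi_injective : Function.Injective φ := fun x y hxy => by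
  have hx := hφ x 0
  have hy := hφ y 0
  rw [Fin.val_zero, hf0, one_mul] at hx hy
  rw [hx, hy, hxy]

theorem phi_row_eq (x : F) (i : Fin n) : φ x i = φ (f i * x) 0 := by
  apply phi_eq_of_mul_eq hindep hφ
  simpa [hf0] using hφ (f i * x) 0

theorem phi_zero_apply_eq_zero_of_mem_Lset {y : F} {k : ℕ} (hy : y ∈ Lset G f k) {j : Fin n}
    (hj : k < j) : φ y 0 j = 0 := by
  obtain ⟨c, hc, rfl⟩ := hy
  have hrow : φ (∑ m ∈ range (k + 1), c m * f m) 0 =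
      fun j : Fin n => if (j : ℕ) ≤ k then ⟨c j, hc j⟩ else 0 := by
    apply phi_eq_of_mul_eq hindep hφ
    simp only [Fin.val_zero, hf0, one_mul, apply_ite Subtype.val, ZeroMemClass.coe_zero, ite_mul,
      zero_mul]
    rw [Fin.sum_univ_eq_sum_range (fun m => if m ≤ k then c m * f m else 0), ← sum_filter]
    congr 1
    ext m
    simp only [mem_range, mem_filter]
    omega
  simp [hrow, hj.not_ge]

theorem phi_apply_eq_zero_of_mul_mem_Lset {x : F} {i j : Fin n} {k : ℕ}
    (hx : f i * x ∈ Lset G f k) (hj : k < j) : φ x i j = 0 := by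
  rw [phi_row_eq hindep hφ hf0]
  exact phi_zero_apply_eq_zero_of_mem_Lset hindep hφ hf0 hx hj

theorem f_notMem_Lset {k : ℕ} (hk : k + 1 < n) : f (k + 1) ∉ Lset G f k := fun h => by
  have h1 := phi_row_eq hindep hφ hf0 1 ⟨k + 1, hk⟩
  rw [mul_one, phi_one hindep hφ] at h1
  have := phi_zero_apply_eq_zero_of_mem_Lset hindep hφ hf0 h (j := ⟨k + 1, hk⟩) k.lt_succ_self
  simp [← h1] at this

end RegularRepresentation

section Tightness

variable {K : Subfield F} {f : ℕ → F} {n : ℕ} [NeZero n]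
  {φ : F → Matrix (Fin n) (Fin n) K.toSubring}
  (hindep : ∀ c : ℕ → F, (∀ i, c i ∈ K.toSubring) →
    ∑ i ∈ Finset.range n, c i * f i = 0 → ∀ i < n, c i = 0)
  (hφ : ∀ (x : F) (i : Fin n), f (i : ℕ) * x = ∑ j : Fin n, (φ x i j : F) * f (j : ℕ))
  (hf0 : f 0 = 1)
  (hD : ∀ k < n - 1, ∃ e ∈ Dset K.toSubring f k, e ∉ Sset K.toSubring f k ∧
    ∀ x ∈ Dset K.toSubring f k, ∃ s ∈ Sset K.toSubring f k, ∃ t ∈ Sset K.toSubring f k,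
      x = s + e * t)
include hindep hφ hf0 hD

theorem exists_phi_row_eq {i : Fin n} {k : ℕ} (hik : (i : ℕ) ≤ k)
    (v : Fin n → K.toSubring) :
    ∃ x : F, (∀ i' : Fin n, (i' : ℕ) < i → ∀ j : Fin n, k ≤ j → φ x i' j = 0) ∧
      ∀ j : Fin n, k ≤ j → φ x i j = v j := by
  set τ := ∑ j, (v j : F) * f j
  have hτ : φ τ 0 = v := phi_eq_of_mul_eq hindep hφ (by rw [Fin.val_zero, hf0, one_mul])
  obtain ⟨_ | i, hi⟩ := i
  · refine ⟨τ, fun i' hi' => absurd hi' (Nat.not_lt_zero _), fun j _ => ?_⟩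
    rw [← hτ]
    rfl
  · simp only at hik ⊢
    have hnot : ∀ k, k + 1 < n → f (k + 1) ∉ Lset K.toSubring f k :=
      fun _ => f_notMem_Lset hindep hφ hf0
    obtain ⟨l, hl, t, ht, hτlt⟩ := exists_eq_add_mul_of_notMem_Lset hf0 hnot hD (k := i)
      (by omega) (hnot i hi) τ
    refine ⟨t, fun i' hi' j hj => ?_, fun j hj => ?_⟩
    · exact phi_apply_eq_zero_of_mul_mem_Lset hindep hφ hf0 (ht _ (f_mem_Lset (by omega)))
        (by omega)
    · have hrow : φ t ⟨i + 1, hi⟩ = (φ τ - φ l) 0 := by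
        rw [phi_row_eq hindep hφ hf0, ← phi_sub hindep hφ, hτlt, add_sub_cancel_left]
      rw [hrow, Matrix.sub_apply, hτ,
        phi_zero_apply_eq_zero_of_mem_Lset hindep hφ hf0 hl (by omega), sub_zero]

theorem exists_phi_block_eq {k : ℕ} (hk : k < n) :
    ∀ r ≤ k + 1, ∀ g : Matrix (Fin n) (Fin n) K.toSubring,
      ∃ x : F, ∀ i j : Fin n, (i : ℕ) < r → k ≤ (j : ℕ) → φ x i j = g i j
  | 0, _, g => ⟨0, fun i _ hi => absurd hi (Nat.not_lt_zero _)⟩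
  | r + 1, hr, g => by
    obtain ⟨x, hx⟩ := exists_phi_block_eq hk r (by omega) g
    obtain ⟨y, hy_above, hy_row⟩ := exists_phi_row_eq hindep hφ hf0 hD
      (i := ⟨r, by omega⟩) (k := k) (by simp only; omega)
      (g ⟨r, by omega⟩ - φ x ⟨r, by omega⟩)
    refine ⟨x + y, fun i j hi hj => ?_⟩
    rw [phi_add hindep hφ, Matrix.add_apply]
    rcases Nat.lt_succ_iff_lt_or_eq.1 hi with hir | hir
    · rw [hx i j hir hj, hy_above i hir j hj, add_zero]
    · rw [show i = ⟨r, by omega⟩ from Fin.ext hir, hy_row j hj, Pi.sub_apply, add_sub_cancel]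

theorem aTight_phi {a : ℕ} (ha : 1 ≤ a) (han : a ≤ n) : ATight φ a := fun g =>
  (exists_phi_block_eq hindep hφ hf0 hD (k := a - 1) (by omega) a (by omega) g).imp
    fun _ hx i j hi hj => hx i j hi (by omega)

end Tightness

end

theorem stmt0_general {F : Type*} [DivisionRing F] (n : ℕ) (hn : 1 < n)
    (G : Subring F) (hG : ∀ x ∈ G, x⁻¹ ∈ G)
    (f : ℕ → F) (hf0 : f 0 = 1)
    (hindep : ∀ c : ℕ → F, (∀ i, c i ∈ G) →
      ∑ i ∈ Finset.range n, c i * f i = 0 → ∀ i < n, c i = 0)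
    (hD : ∀ k < n - 1, ∃ e ∈ Dset G f k, e ∉ Sset G f k ∧
      ∀ x ∈ Dset G f k, ∃ s ∈ Sset G f k, ∃ t ∈ Sset G f k, x = s + e * t)
    (φ : F → Matrix (Fin n) (Fin n) G)
    (hφ : ∀ (x : F) (i : Fin n), f (i : ℕ) * x = ∑ j : Fin n, (φ x i j : F) * f (j : ℕ)) :
    (∃ ψ : F →+* Matrix (Fin n) (Fin n) G, ⇑ψ = φ) ∧
    Function.Injective φ ∧ (∀ a : ℕ, 1 ≤ a → a ≤ n → ATight φ a) := by
  obtain ⟨K, rfl⟩ : ∃ K : Subfield F, K.toSubring = G := ⟨{ G with inv_mem' := hG }, rfl⟩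
  have : NeZero n := ⟨by omega⟩
  exact ⟨⟨phiRingHom hindep hφ, rfl⟩, phi_injective hφ hf0,
    fun a ha han => aTight_phi hindep hφ hf0 hD ha han⟩

theorem stmt0 {F : Type*} [DivisionRing F] (n : ℕ) (hn : 1 < n)
    (G : Subring F) (hG : ∀ x ∈ G, x⁻¹ ∈ G)
    (f : ℕ → F) (hf0 : f 0 = 1)
    (hspan : ∀ x : F, ∃ c : ℕ → F, (∀ i, c i ∈ G) ∧ x = ∑ i ∈ Finset.range n, c i * f i)
    (hindep : ∀ c : ℕ → F, (∀ i, c i ∈ G) →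
      ∑ i ∈ Finset.range n, c i * f i = 0 → ∀ i < n, c i = 0)
    (hD : ∀ k < n - 1, ∃ e ∈ Dset G f k, e ∉ Sset G f k ∧
      ∀ x ∈ Dset G f k, ∃ s ∈ Sset G f k, ∃ t ∈ Sset G f k, x = s + e * t)
    (φ : F → Matrix (Fin n) (Fin n) G)
    (hφ : ∀ (x : F) (i : Fin n), f (i : ℕ) * x = ∑ j : Fin n, (φ x i j : F) * f (j : ℕ)) :
    (∃ ψ : F →+* Matrix (Fin n) (Fin n) G, ⇑ψ = φ) ∧
    Function.Injective φ ∧ (∀ a : ℕ, 1 ≤ a → a ≤ n → ATight φ a) :=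
  stmt0_general n hn G hG f hf0 hindep hD φ hφ
end

section
/- Let n > 1 be an integer, F and G division rings, and φ : F → Mₙ(G) a 1-tight ring embedding. Suppose ν : G → F is a map such that for every g ∈ G the first row of φ(ν(g)) is (g, 0, …, 0), and f_0, …, f_{n−1} ∈ F are elements such that for each i the first row of φ(f_i) is the i-th standard basis row (a 1 in position i+1 and zeros elsewhere). Then ν is an injective ring homomorphism, f_0 = 1, and {f_0, …, f_{n−1}} is a basis of F as a left vector space over the division subring ν(G). -/
namespace RingHom

variable {F G m : Type*} [DivisionRing F] [Ring G] [Fintype m] [DecidableEq m]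
  (φ : F →+* Matrix m m G) (r : m)

theorem eq_zero_of_matrix_row_eq_zero [Nontrivial G] {x : F} (hx : ∀ j, φ x r j = 0) :
    x = 0 := by
  by_contra hx0
  have hunit : φ x * φ x⁻¹ = 1 := by rw [← map_mul, mul_inv_cancel₀ hx0, map_one]
  have hrr := congrFun (congrFun hunit r) r
  simp only [Matrix.mul_apply, hx, zero_mul, Finset.sum_const_zero, Matrix.one_apply_eq] at hrr
  exact zero_ne_one hrr

theorem eq_of_matrix_row_eq [Nontrivial G] {x y : F} (h : ∀ j, φ x r j = φ y r j) : x = y :=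
  sub_eq_zero.mp <| φ.eq_zero_of_matrix_row_eq_zero r fun j => by
    rw [map_sub, Matrix.sub_apply, h, sub_self]

theorem matrix_row_mul_of_row_eq_single {y : F} {g : G}
    (hy : ∀ j, φ y r j = (Pi.single r g : m → G) j) (x : F) (j : m) :
    φ (y * x) r j = g * φ x r j := by
  simp only [map_mul, Matrix.mul_apply, hy, Pi.single_apply, ite_mul, zero_mul,
    Finset.sum_ite_eq', Finset.mem_univ, if_true]

variable {φ r} {ν : G → F}

theorem exists_ringHom_of_matrix_row_eq_single [Nontrivial G]
    (hν : ∀ g j, φ (ν g) r j = (Pi.single r g : m → G) j) : ∃ ν' : G →+* F, ⇑ν' = ν := by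
  refine ⟨{ toFun := ν, map_one' := ?_, map_mul' := ?_, map_zero' := ?_, map_add' := ?_ }, rfl⟩
  · exact φ.eq_of_matrix_row_eq r fun j => by rw [hν, map_one, Matrix.one_eq_pi_single]
  · intro g h
    exact φ.eq_of_matrix_row_eq r fun j => by
      simp only [φ.matrix_row_mul_of_row_eq_single r (hν g), hν, Pi.single_apply, mul_ite,
        mul_zero]
  · exact φ.eq_of_matrix_row_eq r fun j => by
      rw [hν, map_zero, Matrix.zero_apply, Pi.single_zero, Pi.zero_apply]
  · intro g h
    exact φ.eq_of_matrix_row_eq r fun j => by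
      rw [map_add, Matrix.add_apply, hν, hν, hν, Pi.single_add, Pi.add_apply]

theorem injective_of_matrix_row_eq_single
    (hν : ∀ g j, φ (ν g) r j = (Pi.single r g : m → G) j) : Function.Injective ν :=
  fun g h hgh => by
    simpa only [hν, Pi.single_eq_same] using congrArg (fun x => φ x r r) hgh

theorem matrix_row_sum_mul_of_row_eq_single
    (hν : ∀ g j, φ (ν g) r j = (Pi.single r g : m → G) j) {f : m → F}
    (hf : ∀ i j, φ (f i) r j = (Pi.single i 1 : m → G) j) (c : m → G) (j : m) :
    φ (∑ i, ν (c i) * f i) r j = c j := by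
  simp only [map_sum, Matrix.sum_apply, φ.matrix_row_mul_of_row_eq_single r (hν _), hf,
    Pi.single_apply, mul_ite, mul_one, mul_zero, Finset.sum_ite_eq, Finset.mem_univ, if_true]

end RingHom

theorem stmt1 {F G : Type*} [DivisionRing F] [DivisionRing G] (n : ℕ) (hn : 1 < n)
    (φ : F →+* Matrix (Fin n) (Fin n) G)
    (ν : G → F)
    (hν : ∀ (g : G) (j : Fin n),
      φ (ν g) ⟨0, by omega⟩ j = if (j : ℕ) = 0 then g else 0)
    (f : Fin n → F)
    (hf : ∀ i j : Fin n,
      φ (f i) ⟨0, by omega⟩ j = if (j : ℕ) = (i : ℕ) then 1 else 0) :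
    (∃ ν' : G →+* F, ⇑ν' = ν) ∧ Function.Injective ν ∧
    f ⟨0, by omega⟩ = 1 ∧
    (∀ x : F, ∃ c : Fin n → G, x = ∑ i, ν (c i) * f i) ∧
    (∀ c : Fin n → G, ∑ i, ν (c i) * f i = 0 → ∀ i, c i = 0) := by
  set z : Fin n := ⟨0, by omega⟩
  have hν' : ∀ g j, φ (ν g) z j = (Pi.single z g : Fin n → G) j := fun g j => by
    simp only [hν, Pi.single_apply, Fin.ext_iff]; rfl
  have hf' : ∀ i j, φ (f i) z j = (Pi.single i 1 : Fin n → G) j := fun i j => by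
    simp only [hf, Pi.single_apply, Fin.ext_iff]
  have row_sum := RingHom.matrix_row_sum_mul_of_row_eq_single hν' hf'
  refine ⟨RingHom.exists_ringHom_of_matrix_row_eq_single hν',
    RingHom.injective_of_matrix_row_eq_single hν', ?_, ?_, ?_⟩
  · exact φ.eq_of_matrix_row_eq z fun j => by rw [hf', map_one, Matrix.one_eq_pi_single]
  · exact fun x => ⟨φ x z, φ.eq_of_matrix_row_eq z fun j => (row_sum _ j).symm⟩
  · intro c hc i
    simpa only [hc, map_zero, Matrix.zero_apply] using (row_sum c i).symm
end

section
/- Suppose that for every integer N there exists an integer n ≥ max(N, 3), a division ring F_n with a division subring G_n, and elements f_0 = 1, f_1, …, f_{n−1} forming a left G_n-basis of F_n, such that every x ∈ F_n can be written x = a + f_1·b with a, b ∈ G_n, and for each 1 ≤ k ≤ n−2 there exists e ∈ D_k such that every d ∈ D_k can be written d = s + e·t with s, t ∈ S_k. Then there exist a division ring F, a division subring G of F, and a sequence (f_i)_{i∈ℕ} of elements of F with f_0 = 1 satisfying: (T4) every x ∈ F can be written x = a + f_1·b with a, b ∈ G; (T5) the family (f_i)_{i∈ℕ} is left linearly independent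 over G; (T6) for every k ≥ 1 there exists b ∈ D_k such that every x ∈ D_k can be written x = s + b·t with s, t ∈ S_k. (This is the semantic form of the compactness theorem: the existence, for infinitely many n, of division ring extensions whose bimodule has right dimension sequence (1,2,…,2,1,n) of length n+2 yields a model of the theory T, hence a squared small counterexample to the pure semisimplicity conjecture.) -/
/-!
Take the ultraproduct of the extensions `Gₙ ⊆ Fₙ` over a non-principal ultrafilter on `ℕ`.
Membership in `L_k`, `S_k` and `D_k` only involves the finitely many elements `f_0, …, f_k`, so
it holds in the ultraproduct exactly when it holds in almost every factor (Łoś). Since `n → ∞`,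
each of (T4), (T5) for `f_0, …, f_{m-1}`, and (T6) for a fixed `k` holds in almost every factor,
hence in the ultraproduct.
-/

/-- The data of a division ring `F`, a division subring `G`, and a sequence
`(f_i)_{i∈ℕ}` of elements of `F` with `f_0 = 1`. -/
structure DivExtData : Type 1 where
  F : Type
  [instF : DivisionRing F]
  G : Subring F
  hG : ∀ x ∈ G, x⁻¹ ∈ G
  f : ℕ → F
  hf0 : f 0 = 1

attribute [instance] DivExtData.instF

open Filter

section LeftSpan

variable {F : Type*} [DivisionRing F] {G : Subring F} {f : ℕ → F}

lemma zero_mem_Lset (k : ℕ) : (0 : F) ∈ Lset G f k :=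
  ⟨0, fun _ => G.zero_mem, by simp⟩

lemma add_mem_Lset_s3 {k : ℕ} {x y : F} (hx : x ∈ Lset G f k) (hy : y ∈ Lset G f k) :
    x + y ∈ Lset G f k := by
  obtain ⟨c, hc, rfl⟩ := hx
  obtain ⟨d, hd, rfl⟩ := hy
  exact ⟨c + d, fun i => G.add_mem (hc i) (hd i), by simp [add_mul, Finset.sum_add_distrib]⟩

lemma mul_mem_Lset {k : ℕ} {g x : F} (hg : g ∈ G) (hx : x ∈ Lset G f k) :
    g * x ∈ Lset G f k := by
  obtain ⟨c, hc, rfl⟩ := hx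
  exact ⟨fun i => g * c i, fun i => G.mul_mem hg (hc i), by simp [Finset.mul_sum, mul_assoc]⟩

lemma apply_mem_Lset {i k : ℕ} (hi : i ≤ k) : f i ∈ Lset G f k := by
  refine ⟨Pi.single i 1, fun j => ?_, ?_⟩
  · rcases eq_or_ne j i with rfl | hj
    · simp [G.one_mem]
    · simp [hj, G.zero_mem]
  · rw [Finset.sum_eq_single_of_mem i (Finset.mem_range.2 (Nat.lt_succ_of_le hi))
      fun j _ hj => by simp [hj]]
    simp

lemma forall_mem_Lset_mul_mem_iff {j k : ℕ} {a : F} :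
    (∀ x ∈ Lset G f j, x * a ∈ Lset G f k) ↔ ∀ i ≤ j, f i * a ∈ Lset G f k := by
  refine ⟨fun h i hi => h _ (apply_mem_Lset hi), ?_⟩
  rintro h _ ⟨c, hc, rfl⟩
  rw [Finset.sum_mul]
  refine Finset.sum_induction _ (· ∈ Lset G f k) (fun _ _ => add_mem_Lset_s3) (zero_mem_Lset k)
    fun i hi => ?_
  rw [mul_assoc]
  exact mul_mem_Lset (hc i) (h i (Nat.lt_succ_iff.1 (Finset.mem_range.1 hi)))

variable (G f) in
def IsLeftIndepUpTo (n : ℕ) : Prop :=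
  ∀ c : ℕ → F, (∀ i, c i ∈ G) → ∑ i ∈ Finset.range n, c i * f i = 0 → ∀ i < n, c i = 0

lemma IsLeftIndepUpTo.mono {m n : ℕ} (h : IsLeftIndepUpTo G f n) (hmn : m ≤ n) :
    IsLeftIndepUpTo G f m := by
  classical
  intro c hc hsum i hi
  have hsum' : ∑ j ∈ Finset.range n, (if j < m then c j else 0) * f j = 0 := by
    rw [← Finset.sum_subset (Finset.range_subset_range.2 hmn) fun j _ hj => by
      simp [Finset.mem_range.not.1 hj], ← hsum]
    exact Finset.sum_congr rfl fun j hj => by simp [Finset.mem_range.1 hj]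
  simpa [hi] using h _ (fun j => by split_ifs; exacts [hc j, G.zero_mem]) hsum' i (hi.trans_le hmn)

end LeftSpan

section

variable {α : Type*} (U : Ultrafilter α) (R : α → Type*) [∀ a, Ring (R a)]

def Ultraproduct.ringCon : RingCon (∀ a, R a) where
  r v w := ∀ᶠ a in U, v a = w a
  iseqv := ⟨fun _ => .of_forall fun _ => rfl, fun h => h.mono fun _ => Eq.symm,
    fun h₁ h₂ => (h₁.and h₂).mono fun _ h => h.1.trans h.2⟩
  mul' h₁ h₂ := (h₁.and h₂).mono fun _ h => by simp only [Pi.mul_apply, h.1, h.2]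
  add' h₁ h₂ := (h₁.and h₂).mono fun _ h => by simp only [Pi.add_apply, h.1, h.2]

def Ultraproduct : Type _ := (Ultraproduct.ringCon U R).Quotient

namespace Ultraproduct

instance : Ring (Ultraproduct U R) := inferInstanceAs (Ring (ringCon U R).Quotient)

variable {R}

def mk : (∀ a, R a) →+* Ultraproduct U R := RingCon.mk' _

lemma mk_surjective : Function.Surjective (mk U (R := R)) :=
  fun x => Quotient.inductionOn' x fun v => ⟨v, rfl⟩

variable {U}

lemma mk_eq_mk_iff {v w : ∀ a, R a} : mk U v = mk U w ↔ ∀ᶠ a in U, v a = w a :=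
  RingCon.eq _

lemma mk_eq_zero_iff {v : ∀ a, R a} : mk U v = 0 ↔ ∀ᶠ a in U, v a = 0 := by
  rw [← map_zero (mk U), mk_eq_mk_iff]
  rfl

lemma eventually_ne_zero {v : ∀ a, R a} (h : mk U v ≠ 0) : ∀ᶠ a in U, v a ≠ 0 :=
  Ultrafilter.eventually_not.2 (mt mk_eq_zero_iff.2 h)

instance [∀ a, Nontrivial (R a)] : Nontrivial (Ultraproduct U R) :=
  ⟨⟨0, 1, fun h => by
    rw [← map_zero (mk U), ← map_one (mk U), mk_eq_mk_iff] at h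
    obtain ⟨a, ha⟩ := h.exists
    exact zero_ne_one ha⟩⟩

variable (U) in
def subring (S : ∀ a, Subring (R a)) : Subring (Ultraproduct U R) where
  carrier := {x | ∃ v, (∀ a, v a ∈ S a) ∧ mk U v = x}
  zero_mem' := ⟨0, fun a => (S a).zero_mem, map_zero _⟩
  one_mem' := ⟨1, fun a => (S a).one_mem, map_one _⟩
  add_mem' := by
    rintro _ _ ⟨v, hv, rfl⟩ ⟨w, hw, rfl⟩
    exact ⟨v + w, fun a => (S a).add_mem (hv a) (hw a), map_add _ _ _⟩
  mul_mem' := by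
    rintro _ _ ⟨v, hv, rfl⟩ ⟨w, hw, rfl⟩
    exact ⟨v * w, fun a => (S a).mul_mem (hv a) (hw a), map_mul _ _ _⟩
  neg_mem' := by
    rintro _ ⟨v, hv, rfl⟩
    exact ⟨-v, fun a => (S a).neg_mem (hv a), map_neg _ _⟩

variable {S : ∀ a, Subring (R a)}

lemma mem_subring_iff {x : Ultraproduct U R} :
    x ∈ subring U S ↔ ∃ v, (∀ a, v a ∈ S a) ∧ mk U v = x :=
  Iff.rfl

lemma mk_mem_subring_iff {v : ∀ a, R a} : mk U v ∈ subring U S ↔ ∀ᶠ a in U, v a ∈ S a := by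
  refine ⟨fun ⟨w, hw, hwv⟩ => (mk_eq_mk_iff.1 hwv).mono fun a ha => ha ▸ hw a, fun h => ?_⟩
  classical
  refine ⟨fun a => if v a ∈ S a then v a else 0, fun a => ?_,
    mk_eq_mk_iff.2 (h.mono fun a ha => ?_)⟩
  · by_cases ha : v a ∈ S a <;> simp [ha]
  · simp [ha]

lemma exists_mk_add_mul {A : ∀ a, Set (R a)} {B : Set (Ultraproduct U R)}
    (hAB : ∀ v, (∀ᶠ a in U, v a ∈ A a) → mk U v ∈ B) {v e : ∀ a, R a}
    (h : ∀ᶠ a in U, ∃ s ∈ A a, ∃ t ∈ A a, v a = s + e a * t) :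
    ∃ s ∈ B, ∃ t ∈ B, mk U v = s + mk U e * t := by
  obtain ⟨s, hs⟩ := Filter.skolem.1 h
  obtain ⟨t, ht⟩ := Filter.skolem.1 (hs.mono fun _ h => h.2)
  refine ⟨mk U s, hAB s (hs.mono fun _ h => h.1), mk U t, hAB t (ht.mono fun _ h => h.1), ?_⟩
  rw [← map_mul, ← map_add, mk_eq_mk_iff]
  exact ht.mono fun _ h => h.2

end Ultraproduct

end

namespace Ultraproduct

variable {α : Type*} {U : Ultrafilter α} {R : α → Type*} [∀ a, DivisionRing (R a)]

lemma mk_mul_mk_inv {v : ∀ a, R a} (h : mk U v ≠ 0) : mk U v * mk U (fun a => (v a)⁻¹) = 1 := by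
  rw [← map_mul, ← map_one (mk U), mk_eq_mk_iff]
  exact (eventually_ne_zero h).mono fun _ => mul_inv_cancel₀

lemma mk_inv_mul_mk {v : ∀ a, R a} (h : mk U v ≠ 0) : mk U (fun a => (v a)⁻¹) * mk U v = 1 := by
  rw [← map_mul, ← map_one (mk U), mk_eq_mk_iff]
  exact (eventually_ne_zero h).mono fun _ => inv_mul_cancel₀

variable (U R) in
noncomputable instance : DivisionRing (Ultraproduct U R) :=
  DivisionRing.ofIsUnitOrEqZero fun x => by
    obtain ⟨v, rfl⟩ := mk_surjective U x
    by_cases h : mk U v = 0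
    · exact .inr h
    · exact .inl ⟨⟨_, _, mk_mul_mk_inv h, mk_inv_mul_mk h⟩, rfl⟩

lemma mk_inv (v : ∀ a, R a) : mk U (fun a => (v a)⁻¹) = (mk U v)⁻¹ := by
  by_cases h : mk U v = 0
  · rw [h, inv_zero, mk_eq_zero_iff]
    exact (mk_eq_zero_iff.1 h).mono fun a ha => by simp [ha]
  · exact (inv_eq_of_mul_eq_one_right (mk_mul_mk_inv h)).symm

lemma inv_mem_subring {S : ∀ a, Subring (R a)} (hS : ∀ a, ∀ x ∈ S a, x⁻¹ ∈ S a)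
    {x : Ultraproduct U R} (hx : x ∈ subring U S) : x⁻¹ ∈ subring U S := by
  obtain ⟨v, hv, rfl⟩ := hx
  exact ⟨_, fun a => hS a _ (hv a), mk_inv v⟩

variable (U) in
def seq (f : ∀ a, ℕ → R a) (i : ℕ) : Ultraproduct U R := mk U fun a => f a i

variable {G : ∀ a, Subring (R a)} {f : ∀ a, ℕ → R a}

lemma mk_sum_mul_seq (w : ℕ → ∀ a, R a) (s : Finset ℕ) :
    ∑ i ∈ s, mk U (w i) * seq U f i = mk U fun a => ∑ i ∈ s, w i a * f a i := by
  simp only [seq, ← map_mul, ← map_sum]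
  congr 1
  ext a
  simp

lemma mk_mem_Lset_iff {k : ℕ} {v : ∀ a, R a} :
    mk U v ∈ Lset (subring U G) (seq U f) k ↔ ∀ᶠ a in U, v a ∈ Lset (G a) (f a) k := by
  constructor
  · rintro ⟨c, hc, hv⟩
    choose w hwG hw using fun i => mem_subring_iff.1 (hc i)
    simp only [← hw, mk_sum_mul_seq, mk_eq_mk_iff] at hv
    exact hv.mono fun a ha => ⟨fun i => w i a, fun i => hwG i a, ha⟩
  · intro h
    obtain ⟨c, hc⟩ := Filter.skolem.1 h
    refine ⟨fun i => mk U fun a => c a i,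
      fun i => mk_mem_subring_iff.2 (hc.mono fun a ha => ha.1 i), ?_⟩
    rw [mk_sum_mul_seq, mk_eq_mk_iff]
    exact hc.mono fun a ha => ha.2

lemma forall_mem_Lset_mul_mk_mem_iff {j k : ℕ} {v : ∀ a, R a} :
    (∀ x ∈ Lset (subring U G) (seq U f) j, x * mk U v ∈ Lset (subring U G) (seq U f) k) ↔
      ∀ᶠ a in U, ∀ x ∈ Lset (G a) (f a) j, x * v a ∈ Lset (G a) (f a) k := by
  simp only [forall_mem_Lset_mul_mem_iff, seq, ← map_mul, mk_mem_Lset_iff]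
  exact (eventually_all_finite (Set.finite_Iic j)).symm

lemma mk_mem_Sset_iff {k : ℕ} {v : ∀ a, R a} :
    mk U v ∈ Sset (subring U G) (seq U f) k ↔ ∀ᶠ a in U, v a ∈ Sset (G a) (f a) k :=
  forall_mem_Lset_mul_mk_mem_iff

lemma mk_mem_Dset_iff {k : ℕ} {v : ∀ a, R a} :
    mk U v ∈ Dset (subring U G) (seq U f) k ↔ ∀ᶠ a in U, v a ∈ Dset (G a) (f a) k := by
  cases k with
  | zero => simp [Dset]
  | succ k => exact forall_mem_Lset_mul_mk_mem_iff

lemma forall_eq_add_seq_one_mul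
    (h : ∀ᶠ a in U, ∀ x : R a, ∃ s ∈ G a, ∃ t ∈ G a, x = s + f a 1 * t) (x : Ultraproduct U R) :
    ∃ s ∈ subring U G, ∃ t ∈ subring U G, x = s + seq U f 1 * t := by
  obtain ⟨v, rfl⟩ := mk_surjective U x
  exact exists_mk_add_mul (fun _ => mk_mem_subring_iff.2) (h.mono fun a ha => ha (v a))

lemma isLeftIndepUpTo_seq {m : ℕ} (h : ∀ᶠ a in U, IsLeftIndepUpTo (G a) (f a) m) :
    IsLeftIndepUpTo (subring U G) (seq U f) m := by
  intro c hc hsum i hi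
  choose w hwG hw using fun i => mem_subring_iff.1 (hc i)
  simp only [← hw, mk_sum_mul_seq, mk_eq_zero_iff] at hsum
  rw [← hw, mk_eq_zero_iff]
  exact (h.and hsum).mono fun a ha => ha.1 (fun j => w j a) (fun j => hwG j a) ha.2 i hi

lemma exists_mem_Dset_spanning {k : ℕ}
    (h : ∀ᶠ a in U, ∃ e ∈ Dset (G a) (f a) k, ∀ d ∈ Dset (G a) (f a) k,
      ∃ s ∈ Sset (G a) (f a) k, ∃ t ∈ Sset (G a) (f a) k, d = s + e * t) :
    ∃ e ∈ Dset (subring U G) (seq U f) k, ∀ d ∈ Dset (subring U G) (seq U f) k,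
      ∃ s ∈ Sset (subring U G) (seq U f) k, ∃ t ∈ Sset (subring U G) (seq U f) k,
        d = s + e * t := by
  obtain ⟨e, he⟩ := Filter.skolem.1 h
  refine ⟨mk U e, mk_mem_Dset_iff.2 (he.mono fun _ h => h.1), fun d hd => ?_⟩
  obtain ⟨v, rfl⟩ := mk_surjective U d
  exact exists_mk_add_mul (fun _ => mk_mem_Sset_iff.2)
    ((he.and (mk_mem_Dset_iff.1 hd)).mono fun a h => h.1.2 _ h.2)

end Ultraproduct

noncomputable def DivExtData.ultraproduct {α : Type} (E : α → DivExtData) (U : Ultrafilter α) :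
    DivExtData where
  F := Ultraproduct U fun a => (E a).F
  G := Ultraproduct.subring U fun a => (E a).G
  hG _ := Ultraproduct.inv_mem_subring fun a => (E a).hG
  f := Ultraproduct.seq U fun a => (E a).f
  hf0 := by simp only [Ultraproduct.seq, DivExtData.hf0]; exact map_one _

/-- Compactness: if for every `N` there is an `n ≥ max N 3` and a division ring
extension `Gₙ ⊆ Fₙ` with a left basis `f_0 = 1, …, f_{n-1}` such that every element is
`a + f_1·b` (`a, b ∈ Gₙ`) and each `D_k` (`1 ≤ k ≤ n-2`) is spanned over `S_k` by `{1, e}`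
for some `e`, then there is a model of the theory `T`: a division ring extension `G ⊆ F`
with a sequence `(f_i)` satisfying (T4), (T5), (T6). -/
theorem stmt3
    (H : ∀ N : ℕ, ∃ n : ℕ, max N 3 ≤ n ∧ ∃ E : DivExtData,
      (∀ x : E.F, ∃ c : ℕ → E.F, (∀ i, c i ∈ E.G) ∧
        x = ∑ i ∈ Finset.range n, c i * E.f i) ∧
      (∀ c : ℕ → E.F, (∀ i, c i ∈ E.G) →
        ∑ i ∈ Finset.range n, c i * E.f i = 0 → ∀ i < n, c i = 0) ∧
      (∀ x : E.F, ∃ a ∈ E.G, ∃ b ∈ E.G, x = a + E.f 1 * b) ∧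
      (∀ k : ℕ, 1 ≤ k → k ≤ n - 2 → ∃ e ∈ Dset E.G E.f k,
        ∀ d ∈ Dset E.G E.f k, ∃ s ∈ Sset E.G E.f k, ∃ t ∈ Sset E.G E.f k,
          d = s + e * t)) :
    ∃ E : DivExtData,
      -- (T4)
      (∀ x : E.F, ∃ a ∈ E.G, ∃ b ∈ E.G, x = a + E.f 1 * b) ∧
      -- (T5)
      (∀ c : ℕ → E.F, (∀ i, c i ∈ E.G) →
        ∀ m : ℕ, ∑ i ∈ Finset.range m, c i * E.f i = 0 → ∀ i < m, c i = 0) ∧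
      -- (T6)
      (∀ k : ℕ, 1 ≤ k → ∃ b ∈ Dset E.G E.f k,
        ∀ x ∈ Dset E.G E.f k, ∃ s ∈ Sset E.G E.f k, ∃ t ∈ Sset E.G E.f k,
          x = s + b * t) := by
  choose n hn E _ hindep hgen hDgen using H
  have hn_large (m : ℕ) : ∀ᶠ N in hyperfilter ℕ, m ≤ n N :=
    Nat.hyperfilter_le_atTop <| (eventually_ge_atTop m).mono fun N hN =>
      hN.trans ((le_max_left N 3).trans (hn N))
  refine ⟨DivExtData.ultraproduct E (hyperfilter ℕ), ?_, ?_, ?_⟩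
  · exact Ultraproduct.forall_eq_add_seq_one_mul (.of_forall hgen)
  · intro c hc m
    exact Ultraproduct.isLeftIndepUpTo_seq
      ((hn_large m).mono fun N h => IsLeftIndepUpTo.mono (hindep N) h) c hc
  · intro k hk
    exact Ultraproduct.exists_mem_Dset_spanning ((hn_large (k + 2)).mono fun N h =>
      hDgen N k hk (by omega))
end

section
/- Let F be a division ring, G a division subring of F, and (f_i)_{i∈ℕ} a sequence in F with f_0 = 1 satisfying axioms (T4), (T5), (T6). Then the extension G ⊆ F is right regular: for any two left G-subspaces H₁, H₂ of F of equal finite dimension there exists a ∈ F with H₁·a = H₂. -/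
/-- The left `G`-span of a finite family of elements of `F`. -/
def GSpan {F : Type*} [DivisionRing F] (G : Subring F) {m : ℕ} (h : Fin m → F) : Set F :=
  {x | ∃ c : Fin m → F, (∀ i, c i ∈ G) ∧ x = ∑ i, c i * h i}

/-!
Write `V·a` (in Lean `op a • V`) for the right translate of a left `G`-subspace `V`. Every
`(m+1)`-dimensional subspace is a right translate of `L_m`, so `H₁·c₁ = L_m = H₂·c₂` gives
`H₁·(c₁c₂⁻¹) = H₂`. The heart is: for every `j` and `a ∈ F` there is `c ≠ 0` with
`L_j·c ⊆ L_{j+1}` and `a·c ∈ L_{j+1}`. For `j = 0` this is (T4). For the step, (T6) writes such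
a `c` as `s + b·t` with `s, t ∈ S_{j+1}`, and then `L_{j+1}·(c·t⁻¹)` lies in
`M = L_{j+1} + G·f_{j+1}·b`, a space of dimension at most `j + 3`. Applied to `a = f_{j+2}` this
exhibits `M` as a right translate of `L_{j+2}`, and translating back gives the claim at level
`j + 1`. Right multiplication by a nonzero element preserves dimension, so an element stabilizing
a finite-dimensional subspace also has an inverse stabilizing it; this is what forces `t ≠ 0`.
-/

open Module Submodule
open MulOpposite (op op_mul op_one)
open scoped Pointwise

namespace RightRegular

variable {F : Type*} [DivisionRing F] {K : Subfield F}

theorem injective_toLinearMap_op {a : F} (ha : a ≠ 0) :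
    Function.Injective (DistribSMul.toLinearMap K F (op a)) :=
  mul_left_injective₀ ha

theorem image_mul_right_eq_op_smul (a : F) (V : Submodule K F) :
    (fun x => x * a) '' (V : Set F) = ↑(op a • V) := by
  simp only [coe_pointwise_smul, ← Set.image_smul, op_smul_eq_mul]

theorem op_smul_le_iff {a : F} {V W : Submodule K F} : op a • V ≤ W ↔ ∀ x ∈ V, x * a ∈ W := by
  rw [← SetLike.coe_subset_coe, coe_pointwise_smul, Set.smul_set_subset_iff]
  rfl

theorem mul_mem_op_smul {a x : F} {V : Submodule K F} (hx : x ∈ V) : x * a ∈ op a • V :=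
  smul_mem_pointwise_smul x (op a) V hx

theorem op_smul_span_range_le_iff {ι : Type*} {a : F} {v : ι → F} {W : Submodule K F} :
    op a • span K (Set.range v) ≤ W ↔ ∀ i, v i * a ∈ W := by
  rw [smul_span, span_le, Set.smul_set_range, Set.range_subset_iff]
  rfl

theorem finrank_op_smul {a : F} (ha : a ≠ 0) (V : Submodule K F) :
    finrank K ↥(op a • V) = finrank K V :=
  (equivMapOfInjective _ (injective_toLinearMap_op ha) V).finrank_eq.symm

theorem op_inv_smul_eq {a : F} (ha : a ≠ 0) {V W : Submodule K F} (h : op a • V = W) :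
    op a⁻¹ • W = V := by
  rw [← h, smul_smul, ← op_mul, mul_inv_cancel₀ ha, op_one, one_smul]

theorem op_smul_eq_of_le_of_finrank_le {a : F} (ha : a ≠ 0) {V W : Submodule K F}
    [FiniteDimensional K W] (h : op a • V ≤ W) (hd : finrank K W ≤ finrank K V) : op a • V = W :=
  eq_of_le_of_finrank_le h (by rwa [finrank_op_smul ha])

theorem op_inv_smul_le_self {a : F} (ha : a ≠ 0) {V : Submodule K F} [FiniteDimensional K V]
    (h : op a • V ≤ V) : op a⁻¹ • V ≤ V :=
  (op_inv_smul_eq ha (op_smul_eq_of_le_of_finrank_le ha h le_rfl)).le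

theorem ne_zero_of_eq_add_mul_of_notMem {V : Submodule K F} [FiniteDimensional K V]
    {a b c s t : F} (hc : c ≠ 0) (hs : op s • V ≤ V) (hac : a * c ∈ V) (ha : a ∉ V)
    (hcst : c = s + b * t) : t ≠ 0 := by
  rintro rfl
  rw [mul_zero, add_zero] at hcst
  subst hcst
  apply ha
  simpa only [mul_assoc, mul_inv_cancel₀ hc, mul_one] using
    op_smul_le_iff.1 (op_inv_smul_le_self hc hs) _ hac

theorem GSpan_toSubring {m : ℕ} (h : Fin m → F) :
    GSpan K.toSubring h = span K (Set.range h) := by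
  ext x
  rw [SetLike.mem_coe, mem_span_range_iff_exists_fun]
  constructor
  · rintro ⟨c, hc, rfl⟩
    exact ⟨fun i => ⟨c i, hc i⟩, rfl⟩
  · rintro ⟨c, rfl⟩
    exact ⟨fun i => c i, fun i => (c i).2, rfl⟩

theorem Lset_eq_GSpan (G : Subring F) (f : ℕ → F) (k : ℕ) :
    Lset G f k = GSpan G (fun i : Fin (k + 1) => f i) := by
  ext x
  constructor
  · rintro ⟨c, hc, rfl⟩
    exact ⟨fun i => c i, fun i => hc i, (Fin.sum_univ_eq_sum_range (fun i => c i * f i) _).symm⟩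
  · rintro ⟨c, hc, rfl⟩
    refine ⟨fun i => if h : i < k + 1 then c ⟨i, h⟩ else 0, fun i => ?_, ?_⟩
    · dsimp only
      split_ifs
      exacts [hc _, G.zero_mem]
    · rw [← Fin.sum_univ_eq_sum_range (fun i => (if h : i < k + 1 then c ⟨i, h⟩ else 0) * f i)]
      simp only [Fin.is_lt, dif_pos, Fin.eta]

theorem linearIndependent_of_sum_mul_eq_zero {ι : Type*} [Fintype ι] {v : ι → F}
    (hv : ∀ c : ι → F, (∀ i, c i ∈ K) → ∑ i, c i * v i = 0 → ∀ i, c i = 0) :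
    LinearIndependent K v :=
  Fintype.linearIndependent_iff.2 fun g hg i =>
    Subtype.ext (hv (fun i => g i) (fun i => (g i).2) hg i)

theorem linearIndependent_of_sum_range_mul_eq_zero {f : ℕ → F}
    (hf : ∀ c : ℕ → F, (∀ i, c i ∈ K) →
      ∀ m : ℕ, ∑ i ∈ Finset.range m, c i * f i = 0 → ∀ i < m, c i = 0) :
    LinearIndependent K f := by
  classical
  refine linearIndependent_iff'.2 fun s g hg i hi => ?_
  obtain ⟨m, hm⟩ := s.exists_nat_subset_range
  have hsum : ∑ j ∈ Finset.range m, (if j ∈ s then (g j : F) else 0) * f j = 0 := by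
    simp only [ite_mul, zero_mul, Finset.sum_ite_mem, Finset.inter_eq_right.2 hm]
    exact hg
  have := hf _ (fun j => by split_ifs <;> simp) m hsum i (Finset.mem_range.1 (hm hi))
  exact Subtype.ext (by simpa [hi] using this)

section InitialSpan

variable (K) (f : ℕ → F)

def initialSpan (k : ℕ) : Submodule K F :=
  span K (Set.range fun i : Fin (k + 1) => f i)

local notation "L" => initialSpan K f

instance (k : ℕ) : FiniteDimensional K (L k) :=
  FiniteDimensional.span_of_finite K (Set.finite_range _)

theorem apply_mem_initialSpan {i k : ℕ} (h : i ≤ k) : f i ∈ L k :=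
  subset_span ⟨⟨i, by omega⟩, rfl⟩

theorem initialSpan_mono {k l : ℕ} (h : k ≤ l) : L k ≤ L l :=
  span_le.2 (Set.range_subset_iff.2 fun i => apply_mem_initialSpan K f (by omega))

theorem mem_initialSpan_zero (hf0 : f 0 = 1) {x : F} (hx : x ∈ K) : x ∈ L 0 := by
  simpa [Subfield.smul_def, hf0] using
    (L 0).smul_mem (⟨x, hx⟩ : K) (apply_mem_initialSpan K f le_rfl)

theorem Lset_toSubring (k : ℕ) : Lset K.toSubring f k = L k := by
  rw [Lset_eq_GSpan, GSpan_toSubring]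
  rfl

theorem Sset_toSubring (k : ℕ) : Sset K.toSubring f k = {s | op s • L k ≤ L k} := by
  ext s
  simp only [Sset, Lset_toSubring, SetLike.mem_coe, Set.mem_ofPred_eq, op_smul_le_iff]

theorem Dset_succ_toSubring (k : ℕ) :
    Dset K.toSubring f (k + 1) = {d | op d • L k ≤ L (k + 1)} := by
  ext d
  simp only [Dset, Lset_toSubring, SetLike.mem_coe, Set.mem_ofPred_eq, op_smul_le_iff]

/-- The decomposition `D_{j+1} ⊆ S_{j+1} + b · S_{j+1}` of axiom (T6). -/
def DecomposesWith (j : ℕ) (b : F) : Prop :=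
  ∀ d, op d • L j ≤ L (j + 1) →
    ∃ s, op s • L (j + 1) ≤ L (j + 1) ∧ ∃ t, op t • L (j + 1) ≤ L (j + 1) ∧ d = s + b * t

variable {K f}

theorem op_smul_initialSpan_le_iff {a : F} {k : ℕ} {W : Submodule K F} :
    op a • L k ≤ W ↔ ∀ i ≤ k, f i * a ∈ W := by
  rw [initialSpan, op_smul_span_range_le_iff]
  exact ⟨fun h i hi => h ⟨i, by omega⟩, fun h i => h i (by omega)⟩

theorem finrank_initialSpan (hf : LinearIndependent K f) (k : ℕ) : finrank K (L k) = k + 1 := by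
  rw [initialSpan, finrank_span_eq_card (b := fun i : Fin (k + 1) => f i)
    (hf.comp _ Fin.val_injective), Fintype.card_fin]

theorem apply_succ_notMem_initialSpan (hf : LinearIndependent K f) (k : ℕ) : f (k + 1) ∉ L k := by
  have h := hf.notMem_span_image (s := Set.Iio (k + 1)) (x := k + 1) (by simp)
  rwa [← Fin.range_val, ← Set.range_comp] at h

end InitialSpan

section Model

variable {f : ℕ → F}

local notation "L" => initialSpan K f

theorem exists_op_smul_le_one (hf0 : f 0 = 1)
    (T4 : ∀ x : F, ∃ a ∈ K, ∃ b ∈ K, x = a + f 1 * b) (x : F) :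
    ∃ c ≠ 0, op c • L 0 ≤ L 1 ∧ x * c ∈ L 1 := by
  obtain ⟨a, ha, b, hb, rfl⟩ := T4 x
  have hK : ∀ y ∈ K, y ∈ L 1 := fun y hy =>
    initialSpan_mono K f zero_le_one (mem_initialSpan_zero K f hf0 hy)
  rcases eq_or_ne b 0 with rfl | hb0
  · refine ⟨1, one_ne_zero, ?_, ?_⟩
    · simpa only [op_one, one_smul] using initialSpan_mono K f zero_le_one
    · simpa using hK a ha
  · refine ⟨b⁻¹, inv_ne_zero hb0, op_smul_initialSpan_le_iff.2 fun i hi => ?_, ?_⟩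
    · obtain rfl := Nat.le_zero.1 hi
      simpa [hf0] using hK _ (K.inv_mem hb)
    · rw [add_mul, mul_assoc, mul_inv_cancel₀ hb0, mul_one]
      exact add_mem (hK _ (K.mul_mem ha (K.inv_mem hb))) (apply_mem_initialSpan K f le_rfl)

theorem op_smul_initialSpan_le_sup {j : ℕ} {b c s t : F}
    (hc : op c • L j ≤ L (j + 1)) (hs : op s • L (j + 1) ≤ L (j + 1))
    (ht : op t • L (j + 1) ≤ L (j + 1)) (ht0 : t ≠ 0) (hcst : c = s + b * t) :
    op (c * t⁻¹) • L (j + 1) ≤ L (j + 1) ⊔ K ∙ (f (j + 1) * b) := by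
  have ht' := op_smul_le_iff.1 (op_inv_smul_le_self ht0 ht)
  refine op_smul_initialSpan_le_iff.2 fun i hi => ?_
  rcases hi.lt_or_eq with hi | rfl
  · rw [← mul_assoc]
    exact mem_sup_left (ht' _ (op_smul_initialSpan_le_iff.1 hc i (by omega)))
  · have : f (j + 1) * (c * t⁻¹) = f (j + 1) * s * t⁻¹ + f (j + 1) * b := by
      rw [hcst, add_mul, mul_assoc b, mul_inv_cancel₀ ht0, mul_one, mul_add, mul_assoc]
    rw [this]
    exact add_mem
      (mem_sup_left (ht' _ (op_smul_le_iff.1 hs _ (apply_mem_initialSpan K f le_rfl))))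
      (mem_sup_right (mem_span_singleton_self _))

theorem exists_op_smul_le_sup_of_notMem {j : ℕ} {a b : F}
    (hdec : DecomposesWith K f j b)
    (ha : ∃ c ≠ 0, op c • L j ≤ L (j + 1) ∧ a * c ∈ L (j + 1)) (haL : a ∉ L (j + 1)) :
    ∃ c ≠ 0, op c • L (j + 1) ≤ L (j + 1) ⊔ K ∙ (f (j + 1) * b) ∧ a * c ∈ L (j + 1) := by
  obtain ⟨c, hc0, hc, hac⟩ := ha
  obtain ⟨s, hs, t, ht, hcst⟩ := hdec c hc
  have ht0 := ne_zero_of_eq_add_mul_of_notMem hc0 hs hac haL hcst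
  refine ⟨c * t⁻¹, mul_ne_zero hc0 (inv_ne_zero ht0),
    op_smul_initialSpan_le_sup hc hs ht ht0 hcst, ?_⟩
  rw [← mul_assoc]
  exact op_smul_le_iff.1 (op_inv_smul_le_self ht0 ht) _ hac

theorem exists_op_smul_le_succ_of_decomposesWith {j : ℕ} {b : F} (hf : LinearIndependent K f)
    (hdec : DecomposesWith K f j b)
    (ih : ∀ a, ∃ c ≠ 0, op c • L j ≤ L (j + 1) ∧ a * c ∈ L (j + 1)) (a : F) :
    ∃ c ≠ 0, op c • L (j + 1) ≤ L (j + 2) ∧ a * c ∈ L (j + 2) := by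
  by_cases ha : a ∈ L (j + 2)
  · exact ⟨1, one_ne_zero, by simpa using initialSpan_mono K f (j + 1).le_succ, by simpa⟩
  set M := L (j + 1) ⊔ K ∙ (f (j + 1) * b)
  obtain ⟨c₁, hc₁0, hc₁, hfc₁⟩ := exists_op_smul_le_sup_of_notMem hdec (ih _)
    (apply_succ_notMem_initialSpan hf (j + 1))
  have hM : op c₁ • L (j + 2) = M := by
    refine op_smul_eq_of_le_of_finrank_le hc₁0 (op_smul_initialSpan_le_iff.2 fun i hi => ?_) ?_
    · rcases hi.lt_or_eq with hi | rfl
      · exact op_smul_initialSpan_le_iff.1 hc₁ i (by omega)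
      · exact mem_sup_left hfc₁
    · calc finrank K M ≤ finrank K (L (j + 1)) + finrank K (K ∙ (f (j + 1) * b)) :=
            finrank_add_le_finrank_add_finrank _ _
        _ ≤ (j + 2) + 1 :=
            add_le_add (finrank_initialSpan hf _).le ((finrank_span_le_card _).trans (by simp))
        _ = finrank K (L (j + 2)) := (finrank_initialSpan hf _).symm
  obtain ⟨c, hc0, hc, hac⟩ := exists_op_smul_le_sup_of_notMem hdec (ih a)
    fun h => ha (initialSpan_mono K f (j + 1).le_succ h)
  refine ⟨c * c₁⁻¹, mul_ne_zero hc0 (inv_ne_zero hc₁0), ?_, ?_⟩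
  · rw [op_mul, mul_smul, ← op_inv_smul_eq hc₁0 hM]
    exact smul_le_smul_left _ hc
  · rw [← op_inv_smul_eq hc₁0 hM, ← mul_assoc]
    exact mul_mem_op_smul (mem_sup_left hac)

theorem exists_op_smul_le_succ (hf0 : f 0 = 1)
    (T4 : ∀ x : F, ∃ a ∈ K, ∃ b ∈ K, x = a + f 1 * b) (hf : LinearIndependent K f)
    (hdec : ∀ j, ∃ b, DecomposesWith K f j b) :
    ∀ (j : ℕ) (a : F), ∃ c ≠ 0, op c • L j ≤ L (j + 1) ∧ a * c ∈ L (j + 1)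
  | 0 => exists_op_smul_le_one hf0 T4
  | j + 1 => exists_op_smul_le_succ_of_decomposesWith hf (hdec j).choose_spec
      (exists_op_smul_le_succ hf0 T4 hf hdec j)

theorem op_smul_span_eq_initialSpan (hf : LinearIndependent K f) {m : ℕ} {h : Fin (m + 1) → F}
    (hh : LinearIndependent K h) {c : F} (hc : c ≠ 0) (hle : ∀ i, h i * c ∈ L m) :
    op c • span K (Set.range h) = L m :=
  op_smul_eq_of_le_of_finrank_le hc (op_smul_span_range_le_iff.2 hle) <| by
    rw [finrank_initialSpan hf, finrank_span_eq_card hh, Fintype.card_fin]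

theorem exists_op_smul_span_eq_initialSpan (hf0 : f 0 = 1)
    (T4 : ∀ x : F, ∃ a ∈ K, ∃ b ∈ K, x = a + f 1 * b) (hf : LinearIndependent K f)
    (hdec : ∀ j, ∃ b, DecomposesWith K f j b)
    (m : ℕ) (h : Fin (m + 1) → F) (hh : LinearIndependent K h) :
    ∃ c ≠ (0 : F), op c • span K (Set.range h) = L m := by
  have h0 : h 0 ≠ 0 := hh.ne_zero 0
  induction m with
  | zero =>
    refine ⟨(h 0)⁻¹, inv_ne_zero h0, op_smul_span_eq_initialSpan hf hh (inv_ne_zero h0) ?_⟩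
    refine Fin.cases ?_ fun i => i.elim0
    rw [mul_inv_cancel₀ h0, ← hf0]
    exact apply_mem_initialSpan K f le_rfl
  | succ m ih =>
    -- `span h · (h 0)⁻¹ c` is spanned by `c` and `L m`; `C` moves both into `L (m + 1)`.
    obtain ⟨c, hc0, hc⟩ := ih (fun i => h i.succ * (h 0)⁻¹)
      ((hh.comp Fin.succ (Fin.succ_injective _)).map' (DistribSMul.toLinearMap K F (op (h 0)⁻¹))
        (LinearMap.ker_eq_bot.2 (injective_toLinearMap_op (inv_ne_zero h0))))
      (mul_ne_zero (hh.ne_zero _) (inv_ne_zero h0))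
    obtain ⟨C, hC0, hC, hcC⟩ := exists_op_smul_le_succ hf0 T4 hf hdec m c
    have hc0' : (h 0)⁻¹ * c * C ≠ 0 := mul_ne_zero (mul_ne_zero (inv_ne_zero h0) hc0) hC0
    refine ⟨(h 0)⁻¹ * c * C, hc0', op_smul_span_eq_initialSpan hf hh hc0' ?_⟩
    refine Fin.cases ?_ fun i => ?_
    · rwa [← mul_assoc, ← mul_assoc, mul_inv_cancel₀ h0, one_mul]
    · have : h i.succ * (h 0)⁻¹ * c ∈ L m := hc ▸ mul_mem_op_smul (subset_span ⟨i, rfl⟩)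
      simpa only [mul_assoc] using op_smul_le_iff.1 hC _ this

end Model

end RightRegular

open RightRegular

/-- In a model of the theory `T`, the extension `G ⊆ F` is right regular: for any two
left `G`-subspaces `H₁, H₂` of `F` of equal finite dimension (given by left
`G`-independent spanning families of the same size `m`) there is `a ∈ F` with
`H₁ · a = H₂`. -/
theorem stmt12 {F : Type*} [DivisionRing F]
    (G : Subring F) (hG : ∀ x ∈ G, x⁻¹ ∈ G)
    (f : ℕ → F) (hf0 : f 0 = 1)
    (T4 : ∀ x : F, ∃ a ∈ G, ∃ b ∈ G, x = a + f 1 * b)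
    (T5 : ∀ c : ℕ → F, (∀ i, c i ∈ G) →
      ∀ m : ℕ, ∑ i ∈ Finset.range m, c i * f i = 0 → ∀ i < m, c i = 0)
    (T6 : ∀ k : ℕ, 1 ≤ k → ∃ b ∈ Dset G f k,
      ∀ x ∈ Dset G f k, ∃ s ∈ Sset G f k, ∃ t ∈ Sset G f k, x = s + b * t) :
    ∀ (m : ℕ) (h₁ h₂ : Fin m → F),
      (∀ c : Fin m → F, (∀ i, c i ∈ G) → ∑ i, c i * h₁ i = 0 → ∀ i, c i = 0) →
      (∀ c : Fin m → F, (∀ i, c i ∈ G) → ∑ i, c i * h₂ i = 0 → ∀ i, c i = 0) →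
      ∃ a : F, (fun x => x * a) '' GSpan G h₁ = GSpan G h₂ := by
  obtain ⟨K, rfl⟩ : ∃ K : Subfield F, K.toSubring = G := ⟨{ G with inv_mem' := hG }, rfl⟩
  have hf : LinearIndependent K f := linearIndependent_of_sum_range_mul_eq_zero T5
  have hdec : ∀ j, ∃ b, DecomposesWith K f j b := by
    intro j
    obtain ⟨b, -, hb⟩ := T6 (j + 1) j.succ_pos
    simp only [Dset_succ_toSubring, Sset_toSubring, Set.mem_ofPred_eq] at hb
    exact ⟨b, hb⟩
  intro m h₁ h₂ hind₁ hind₂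
  simp only [GSpan_toSubring, image_mul_right_eq_op_smul]
  rcases m with _ | m
  · exact ⟨1, by simp [Set.range_eq_empty]⟩
  obtain ⟨c₁, hc₁0, hc₁⟩ := exists_op_smul_span_eq_initialSpan hf0 T4 hf hdec m h₁
    (linearIndependent_of_sum_mul_eq_zero hind₁)
  obtain ⟨c₂, hc₂0, hc₂⟩ := exists_op_smul_span_eq_initialSpan hf0 T4 hf hdec m h₂
    (linearIndependent_of_sum_mul_eq_zero hind₂)
  refine ⟨c₁ * c₂⁻¹, ?_⟩
  rw [op_mul, mul_smul, hc₁, op_inv_smul_eq hc₂0 hc₂]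
end

section
/- Let F and G be division rings, n a positive integer, φ : F → Mₙ(G) a ring embedding, and a, b positive integers with a + b = n + 1. If f, f′ ∈ F are such that φ(f) and φ(f′) have the same upper right a×b block (entries in rows 1,…,a and columns a,…,n), then f = f′. In particular, the element f in the definition of a-tightness is necessarily unique. -/
/-!
If `f ≠ f'`, then `φ (f - f')` is invertible, so its rows are linearly independent. But its
first `a` rows vanish outside the first `a - 1` columns, and `a` linearly independent vectors
cannot live in an `(a - 1)`-dimensional coordinate subspace.
-/

open Finset

theorem LinearIndependent.card_le_card_of_eq_zero {ι κ R : Type*} [DivisionRing R]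
    [Fintype ι] {v : ι → κ → R} (hv : LinearIndependent R v) (t : Finset κ)
    (hzero : ∀ i, ∀ j ∉ t, v i j = 0) : Fintype.card ι ≤ #t := by
  have hrestrict : LinearIndependent R fun i (j : t) => v i j := by
    rw [Fintype.linearIndependent_iff] at hv ⊢
    refine fun g hg => hv g (funext fun j => ?_)
    by_cases hj : j ∈ t
    · simpa using congrFun hg ⟨j, hj⟩
    · simp [hzero _ j hj]
  simpa using hrestrict.fintype_card_le_finrank

theorem Matrix.card_le_card_of_isUnit_of_eq_zero {m R : Type*} [Fintype m] [DecidableEq m]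
    [DivisionRing R] {M : Matrix m m R} (hM : IsUnit M) (s t : Finset m)
    (hzero : ∀ i ∈ s, ∀ j ∉ t, M i j = 0) : #s ≤ #t := by
  have hrows : LinearIndependent R fun i : s => M i :=
    (Matrix.linearIndependent_rows_of_isUnit hM).comp _ Subtype.val_injective
  simpa using hrows.card_le_card_of_eq_zero t fun i j hj => hzero i i.2 j hj

theorem stmt14_general {F G : Type*} [DivisionRing F] [DivisionRing G] (n : ℕ)
    (φ : F →+* Matrix (Fin n) (Fin n) G)
    (a b : ℕ) (ha : 1 ≤ a) (hb : 1 ≤ b) (hab : a + b = n + 1)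
    (f f' : F)
    (h : ∀ i j : Fin n, (i : ℕ) < a → a ≤ (j : ℕ) + 1 → φ f i j = φ f' i j) :
    f = f' := by
  by_contra hne
  have hunit : IsUnit (φ (f - f')) := (sub_ne_zero.mpr hne).isUnit.map φ
  have hcard := Matrix.card_le_card_of_isUnit_of_eq_zero hunit
    {i | (i : ℕ) < a} {j | (j : ℕ) < a - 1} fun i hi j hj => by
      simp only [mem_filter_univ, not_lt] at hi hj
      rw [map_sub, Matrix.sub_apply, h i j hi (by omega), sub_self]
  rw [Fin.card_filter_val_lt, Fin.card_filter_val_lt] at hcard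
  omega

/-- If two elements of `F` have images under a ring embedding `φ : F → Mₙ(G)` with the
same upper-right `a × b` block (`a + b = n + 1`), then they are equal; in particular the
element witnessing `a`-tightness is unique. -/
theorem stmt14 {F G : Type*} [DivisionRing F] [DivisionRing G] (n : ℕ) (hn : 1 ≤ n)
    (φ : F →+* Matrix (Fin n) (Fin n) G) (hinj : Function.Injective φ)
    (a b : ℕ) (ha : 1 ≤ a) (hb : 1 ≤ b) (hab : a + b = n + 1)
    (f f' : F)
    (h : ∀ i j : Fin n, (i : ℕ) < a → a ≤ (j : ℕ) + 1 → φ f i j = φ f' i j) :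
    f = f' :=
  stmt14_general n φ a b ha hb hab f f' h
end

section
/- Let F be a division ring, G a division subring of F, and L a finite-dimensional left G-subspace of F containing 1. Then S = {a ∈ F : L·a ⊆ L} is a subring of F which is closed under inverses of its nonzero elements; that is, S is a division subring of F. -/
theorem coe_span_range_eq_GSpan {F : Type*} [DivisionRing F] (K : Subfield F) {m : ℕ}
    (h : Fin m → F) : (Submodule.span K (Set.range h) : Set F) = GSpan K.toSubring h := by
  ext x
  simp only [SetLike.mem_coe, Submodule.mem_span_range_iff_exists_fun, GSpan, Set.mem_ofPred_eq]
  constructor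
  · rintro ⟨c, rfl⟩
    exact ⟨fun i => c i, fun i => (c i).2, rfl⟩
  · rintro ⟨c, hc, rfl⟩
    exact ⟨fun i => ⟨c i, hc i⟩, rfl⟩

namespace Submodule

variable {R A : Type*} [Ring R] [Ring A] [Module R A]

def rightStabilizer (V : Submodule R A) : Subring A where
  carrier := {a | ∀ x ∈ V, x * a ∈ V}
  one_mem' x hx := by rwa [mul_one]
  mul_mem' ha hb x hx := by rw [← mul_assoc]; exact hb _ (ha x hx)
  zero_mem' x _ := by rw [mul_zero]; exact V.zero_mem
  add_mem' ha hb x hx := by rw [mul_add]; exact V.add_mem (ha x hx) (hb x hx)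
  neg_mem' ha x hx := by rw [mul_neg]; exact V.neg_mem (ha x hx)

theorem coe_rightStabilizer (V : Submodule R A) :
    (V.rightStabilizer : Set A) = {a | ∀ x ∈ V, x * a ∈ V} :=
  rfl

/-- Right multiplication by a nonzero stabilizing element is an injective endomorphism of the
finite-dimensional space `V`, hence surjective; a preimage of `y` under it is `y * a⁻¹`. -/
theorem inv_mem_rightStabilizer {K D : Type*} [DivisionRing K] [DivisionRing D] [Module K D]
    [IsScalarTower K D D] {V : Submodule K D} [FiniteDimensional K V] {a : D}
    (ha : a ∈ V.rightStabilizer) (ha0 : a ≠ 0) : a⁻¹ ∈ V.rightStabilizer := by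
  have hsurj : Set.SurjOn (LinearMap.mulRight K a) V V :=
    (LinearMap.injOn_iff_surjOn (f := LinearMap.mulRight K a) ha).mp
      (mul_left_injective₀ ha0).injOn
  intro y hy
  obtain ⟨x, hx, rfl⟩ := hsurj hy
  rwa [LinearMap.mulRight_apply, mul_inv_cancel_right₀ ha0]

end Submodule

theorem stmt15_general {F : Type*} [DivisionRing F]
    (G : Subring F) (hG : ∀ x ∈ G, x⁻¹ ∈ G)
    (L : Set F)
    (hLfin : ∃ (m : ℕ) (h : Fin m → F), L = GSpan G h) :
    ∃ S : Subring F, (S : Set F) = {a : F | ∀ x ∈ L, x * a ∈ L} ∧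
      ∀ a ∈ S, a ≠ 0 → a⁻¹ ∈ S := by
  obtain ⟨m, h, rfl⟩ := hLfin
  let K : Subfield F := { G with inv_mem' := hG }
  let V : Submodule K F := Submodule.span K (Set.range h)
  have hV : (V : Set F) = GSpan G h := coe_span_range_eq_GSpan K h
  have : FiniteDimensional K V := FiniteDimensional.span_of_finite K (Set.finite_range h)
  refine ⟨V.rightStabilizer, ?_, fun a ha ha0 => Submodule.inv_mem_rightStabilizer ha ha0⟩
  rw [Submodule.coe_rightStabilizer, ← hV]
  rfl

/-- If `L` is a finite-dimensional left `G`-subspace of `F` containing `1`, then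
`S = {a ∈ F : L·a ⊆ L}` is a subring of `F` closed under inverses of its nonzero
elements, i.e. a division subring of `F`. -/
theorem stmt15 {F : Type*} [DivisionRing F]
    (G : Subring F) (hG : ∀ x ∈ G, x⁻¹ ∈ G)
    (L : Set F) (hL1 : (1 : F) ∈ L)
    (hLfin : ∃ (m : ℕ) (h : Fin m → F), L = GSpan G h) :
    ∃ S : Subring F, (S : Set F) = {a : F | ∀ x ∈ L, x * a ∈ L} ∧
      ∀ a ∈ S, a ≠ 0 → a⁻¹ ∈ S :=
  stmt15_general G hG L hLfin
end

section
/- Let n ≥ 2 be an integer, F a division ring, G a division subring of F, and f_0 = 1, f_1, …, f_{n−1} a left G-basis of F. Suppose moreover that {1, f_1} is a right G-basis of F, i.e., every x ∈ F can be written uniquely as x = a + f_1·b with a, b ∈ G. Let φ : F → Mₙ(G) be the left regular representation with respect to the left basis. Then φ is 2-tight: for every 2×(n−1) matrix g over G there exists f ∈ F such that the upper right 2×(n−1) block of φ(f) (entries in rows 1, 2 and columns 2,…,n) equals g. -/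
section LeftCoordinates

variable {F : Type*} [Ring F] {n : ℕ} {G : Subring F} {f : ℕ → F}

theorem coeffs_eq_of_sum_mul_eq
    (hindep : ∀ c : ℕ → F, (∀ i, c i ∈ G) →
      ∑ i ∈ Finset.range n, c i * f i = 0 → ∀ i < n, c i = 0)
    {c d : Fin n → G} (h : ∑ j, (c j : F) * f j = ∑ j, (d j : F) * f j) : c = d := by
  funext j
  have hcoeff := hindep (fun i => if hi : i < n then (c ⟨i, hi⟩ - d ⟨i, hi⟩ : F) else 0)
    (fun i => by split_ifs; exacts [G.sub_mem (c _).2 (d _).2, G.zero_mem])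
    (by simp only [Finset.sum_range, Fin.is_lt, dif_pos, Fin.eta, sub_mul,
      Finset.sum_sub_distrib, h, sub_self]) j j.isLt
  simp only [Fin.is_lt, dif_pos, Fin.eta, sub_eq_zero] at hcoeff
  exact Subtype.ext hcoeff

theorem row_eq_of_mul_eq_sum
    (hindep : ∀ c : ℕ → F, (∀ i, c i ∈ G) →
      ∑ i ∈ Finset.range n, c i * f i = 0 → ∀ i < n, c i = 0)
    {φ : F → Matrix (Fin n) (Fin n) G}
    (hφ : ∀ (x : F) (i : Fin n), f (i : ℕ) * x = ∑ j : Fin n, (φ x i j : F) * f (j : ℕ))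
    {x : F} {i : Fin n} {e : Fin n → G} (h : f i * x = ∑ j, (e j : F) * f j) : φ x i = e :=
  coeffs_eq_of_sum_mul_eq hindep ((hφ x i).symm.trans h)

theorem sum_cons_mul (hf0 : f 0 = 1) {m : ℕ} (b : G) (t : Fin m → G) :
    ∑ j : Fin (m + 1), ((Fin.cons b t : Fin (m + 1) → G) j : F) * f j
      = b + ∑ k : Fin m, (t k : F) * f (k + 1) := by
  simp [Fin.sum_univ_succ, hf0]

end LeftCoordinates

theorem stmt17_general {F : Type*} [DivisionRing F] (n : ℕ) (hn : 2 ≤ n)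
    (G : Subring F)
    (f : ℕ → F) (hf0 : f 0 = 1)
    (hindep : ∀ c : ℕ → F, (∀ i, c i ∈ G) →
      ∑ i ∈ Finset.range n, c i * f i = 0 → ∀ i < n, c i = 0)
    -- `{1, f_1}` is a right `G`-basis of `F`
    (hright : ∀ x : F, ∃ a ∈ G, ∃ b ∈ G, (x = a + f 1 * b ∧
      ∀ a' b' : F, a' ∈ G → b' ∈ G → x = a' + f 1 * b' → a' = a ∧ b' = b))
    (φ : F → Matrix (Fin n) (Fin n) G)
    (hφ : ∀ (x : F) (i : Fin n), f (i : ℕ) * x = ∑ j : Fin n, (φ x i j : F) * f (j : ℕ)) :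
    ATight φ 2 := by
  intro g
  obtain ⟨m, rfl⟩ : ∃ m, n = m + 2 := ⟨n - 2, by omega⟩
  let tail : Fin (m + 2) → F := fun i => ∑ k : Fin (m + 1), (g i k.succ : F) * f (k + 1)
  obtain ⟨a, ha, b, hb, hab, -⟩ := hright (tail 1 - f 1 * tail 0)
  refine ⟨b + tail 0, ?_⟩
  have row0 : φ (b + tail 0) 0 = Fin.cons ⟨b, hb⟩ fun k => g 0 k.succ :=
    row_eq_of_mul_eq_sum hindep hφ (by rw [sum_cons_mul hf0, Fin.val_zero, hf0, one_mul])
  have row1 : φ (b + tail 0) 1 = Fin.cons ⟨-a, G.neg_mem ha⟩ fun k => g 1 k.succ :=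
    row_eq_of_mul_eq_sum hindep hφ (by
      have hb1 : f 1 * b = tail 1 - f 1 * tail 0 - a := by rw [hab]; abel
      rw [sum_cons_mul hf0, Fin.val_one]
      change f 1 * (b + tail 0) = -a + tail 1
      rw [mul_add, hb1]; abel)
  intro i j hi hj
  obtain ⟨k, rfl⟩ : ∃ k : Fin (m + 1), k.succ = j :=
    Fin.exists_succ_eq.mpr (by rintro rfl; simp at hj)
  obtain rfl | rfl : i = 0 ∨ i = 1 := by
    simp only [Fin.ext_iff, Fin.val_zero, Fin.val_one]; omega
  · simp [row0]
  · simp [row1]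

/-- If `f_0 = 1, …, f_{n-1}` is a left `G`-basis of `F` and moreover `{1, f_1}` is a
right `G`-basis of `F`, then the left regular representation `φ : F → Mₙ(G)` is
`2`-tight. -/
theorem stmt17 {F : Type*} [DivisionRing F] (n : ℕ) (hn : 2 ≤ n)
    (G : Subring F) (hG : ∀ x ∈ G, x⁻¹ ∈ G)
    (f : ℕ → F) (hf0 : f 0 = 1)
    (hspan : ∀ x : F, ∃ c : ℕ → F, (∀ i, c i ∈ G) ∧ x = ∑ i ∈ Finset.range n, c i * f i)
    (hindep : ∀ c : ℕ → F, (∀ i, c i ∈ G) →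
      ∑ i ∈ Finset.range n, c i * f i = 0 → ∀ i < n, c i = 0)
    -- `{1, f_1}` is a right `G`-basis of `F`
    (hright : ∀ x : F, ∃ a ∈ G, ∃ b ∈ G, (x = a + f 1 * b ∧
      ∀ a' b' : F, a' ∈ G → b' ∈ G → x = a' + f 1 * b' → a' = a ∧ b' = b))
    (φ : F → Matrix (Fin n) (Fin n) G)
    (hφ : ∀ (x : F) (i : Fin n), f (i : ℕ) * x = ∑ j : Fin n, (φ x i j : F) * f (j : ℕ)) :
    ATight φ 2 :=
  stmt17_general n hn G f hf0 hindep hright φ hφ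
end

section
/- Let n be a positive integer, F a division ring, G a division subring of F, f_0 = 1, f_1, …, f_{n−1} a left G-basis of F, and φ : F → Mₙ(G) the left regular representation with respect to this basis. Then for every 0 ≤ k < n and a ∈ F: a ∈ S_k if and only if φ(a)_{ij} = 0 for all 1 ≤ i ≤ k+1 and k+2 ≤ j ≤ n (the (k+1)×(n−k−1) upper right block of φ(a) is zero); and for 1 ≤ k < n, a ∈ D_k if and only if φ(a)_{ij} = 0 for all 1 ≤ i ≤ k and k+2 ≤ j ≤ n (the k×(n−k−1) upper right block of φ(a) is zero). -/
/-!
Right multiplication by `a` is left `G`-linear, so `L_k · a ⊆ L_l` can be tested on the basis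
vectors `f_i`, `i ≤ k`. By definition of `φ`, `f_i · a` is the combination of the basis with
coefficients the `i`-th row of `φ(a)`, and by uniqueness of coordinates it lies in `L_l` exactly
when the entries of that row beyond column `l` vanish.
-/

open Finset

namespace Lset

variable {F : Type*} [DivisionRing F] {G : Subring F} {f : ℕ → F} {k : ℕ}

theorem basis_mem {i : ℕ} (h : i ≤ k) : f i ∈ Lset G f k := by
  refine ⟨Pi.single i 1, fun m => ?_, ?_⟩
  · rcases eq_or_ne m i with rfl | hm
    · simp [G.one_mem]
    · simp [hm, G.zero_mem]
  · simp [Pi.single_apply, Nat.lt_succ_of_le h]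

theorem zero_mem : (0 : F) ∈ Lset G f k :=
  ⟨0, fun _ => G.zero_mem, by simp⟩

theorem add_mem {x y : F} (hx : x ∈ Lset G f k) (hy : y ∈ Lset G f k) :
    x + y ∈ Lset G f k := by
  obtain ⟨c, hc, rfl⟩ := hx
  obtain ⟨d, hd, rfl⟩ := hy
  exact ⟨c + d, fun i => G.add_mem (hc i) (hd i), by simp [add_mul, sum_add_distrib]⟩

theorem mul_mem_left {g x : F} (hg : g ∈ G) (hx : x ∈ Lset G f k) : g * x ∈ Lset G f k := by
  obtain ⟨c, hc, rfl⟩ := hx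
  exact ⟨fun i => g * c i, fun i => G.mul_mem hg (hc i), by simp [mul_sum, mul_assoc]⟩

theorem sum_mul_mem {ι : Type*} (s : Finset ι) {c x : ι → F} (hc : ∀ i ∈ s, c i ∈ G)
    (hx : ∀ i ∈ s, x i ∈ Lset G f k) : ∑ i ∈ s, c i * x i ∈ Lset G f k := by
  classical
  induction s using Finset.induction_on with
  | empty => simpa using zero_mem
  | insert j s hj ih =>
    rw [sum_insert hj]
    exact add_mem (mul_mem_left (hc j (mem_insert_self j s)) (hx j (mem_insert_self j s)))
      (ih (fun i hi => hc i (mem_insert_of_mem hi)) (fun i hi => hx i (mem_insert_of_mem hi)))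

theorem mul_subset_iff {a : F} {l : ℕ} :
    (∀ x ∈ Lset G f k, x * a ∈ Lset G f l) ↔ ∀ i ≤ k, f i * a ∈ Lset G f l := by
  refine ⟨fun h i hi => h _ (basis_mem hi), fun h x hx => ?_⟩
  obtain ⟨c, hc, rfl⟩ := hx
  simp only [sum_mul, mul_assoc]
  exact sum_mul_mem _ (fun i _ => hc i)
    (fun i hi => h i (Nat.lt_succ_iff.mp (mem_range.mp hi)))

theorem sum_mem_iff {n : ℕ}
    (hindep : ∀ c : ℕ → F, (∀ i, c i ∈ G) →
      ∑ i ∈ range n, c i * f i = 0 → ∀ i < n, c i = 0)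
    (hk : k < n) {c : ℕ → F} (hc : ∀ i, c i ∈ G) :
    ∑ i ∈ range n, c i * f i ∈ Lset G f k ↔ ∀ i, k < i → i < n → c i = 0 := by
  have hsub : range (k + 1) ⊆ range n := range_subset_range.2 hk
  constructor
  · rintro ⟨d, hd, heq⟩ i hki hin
    set d' : ℕ → F := fun i => if i ≤ k then d i else 0 with hd'
    have hd'G : ∀ i, d' i ∈ G := fun i => by
      by_cases h : i ≤ k <;> simp [hd', h, hd i, G.zero_mem]
    have hd'sum : ∑ i ∈ range n, d' i * f i = ∑ i ∈ range (k + 1), d i * f i := by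
      refine (sum_subset hsub fun i _ hi => ?_).symm.trans (sum_congr rfl fun i hi => ?_)
      · simp [hd', show ¬i ≤ k by simpa [Nat.lt_succ_iff] using hi]
      · simp [hd', Nat.lt_succ_iff.mp (mem_range.mp hi)]
    have hdiff : ∑ j ∈ range n, (c j - d' j) * f j = 0 := by
      simp only [sub_mul, sum_sub_distrib, hd'sum, heq, sub_self]
    simpa [hd', not_le.mpr hki] using
      hindep _ (fun j => G.sub_mem (hc j) (hd'G j)) hdiff i hin
  · intro h
    refine ⟨c, hc, (sum_subset hsub fun i hin hi => ?_).symm⟩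
    simp [h i (by simpa [Nat.lt_succ_iff] using hi) (mem_range.mp hin)]

end Lset

section RegularRepresentation

variable {F : Type*} [DivisionRing F] {G : Subring F} {f : ℕ → F} {n : ℕ}
  (hindep : ∀ c : ℕ → F, (∀ i, c i ∈ G) →
    ∑ i ∈ range n, c i * f i = 0 → ∀ i < n, c i = 0)
  {φ : F → Matrix (Fin n) (Fin n) G}
  (hφ : ∀ (x : F) (i : Fin n), f (i : ℕ) * x = ∑ j : Fin n, (φ x i j : F) * f (j : ℕ))
include hindep hφ

theorem basis_mul_mem_Lset_iff {k : ℕ} (hk : k < n) (a : F) (i : Fin n) :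
    f i * a ∈ Lset G f k ↔ ∀ j : Fin n, k + 1 ≤ (j : ℕ) → φ a i j = 0 := by
  set c : ℕ → F := fun m => if h : m < n then (φ a i ⟨m, h⟩ : F) else 0 with hc
  have hrow : f i * a = ∑ m ∈ range n, c m * f m := by
    rw [hφ, ← Fin.sum_univ_eq_sum_range]
    simp [hc]
  have hcG : ∀ m, c m ∈ G := fun m => by
    by_cases h : m < n <;> simp [hc, h, G.zero_mem]
  rw [hrow, Lset.sum_mem_iff hindep hk hcG]
  refine ⟨fun h j hj => ?_, fun h m hkm hmn => ?_⟩
  · simpa [hc] using h j (by omega) j.isLt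
  · simp [hc, hmn, h ⟨m, hmn⟩ hkm]

theorem mul_Lset_subset_iff {k l : ℕ} (hkl : k ≤ l) (hl : l < n) (a : F) :
    (∀ x ∈ Lset G f k, x * a ∈ Lset G f l) ↔
      ∀ i j : Fin n, (i : ℕ) ≤ k → l + 1 ≤ (j : ℕ) → φ a i j = 0 := by
  rw [Lset.mul_subset_iff]
  refine ⟨fun h i j hi => (basis_mul_mem_Lset_iff hindep hφ hl a i).mp (h i hi) j,
    fun h i hi => ?_⟩
  have hin : i < n := by omega
  exact (basis_mul_mem_Lset_iff hindep hφ hl a ⟨i, hin⟩).mpr (h ⟨i, hin⟩ · hi)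

end RegularRepresentation

theorem stmt18_general {F : Type*} [DivisionRing F] (n : ℕ)
    (G : Subring F)
    (f : ℕ → F)
    (hindep : ∀ c : ℕ → F, (∀ i, c i ∈ G) →
      ∑ i ∈ Finset.range n, c i * f i = 0 → ∀ i < n, c i = 0)
    (φ : F → Matrix (Fin n) (Fin n) G)
    (hφ : ∀ (x : F) (i : Fin n), f (i : ℕ) * x = ∑ j : Fin n, (φ x i j : F) * f (j : ℕ)) :
    (∀ k : ℕ, k < n → ∀ x : F, x ∈ Sset G f k ↔
      ∀ i j : Fin n, (i : ℕ) ≤ k → k + 1 ≤ (j : ℕ) → φ x i j = 0) ∧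
    (∀ k : ℕ, 1 ≤ k → k < n → ∀ x : F, x ∈ Dset G f k ↔
      ∀ i j : Fin n, (i : ℕ) < k → k + 1 ≤ (j : ℕ) → φ x i j = 0) := by
  refine ⟨fun k hk x => mul_Lset_subset_iff hindep hφ le_rfl hk x, fun k hk1 hk x => ?_⟩
  obtain ⟨m, rfl⟩ : ∃ m, k = m + 1 := ⟨k - 1, by omega⟩
  simp only [Nat.lt_succ_iff]
  exact mul_Lset_subset_iff hindep hφ m.le_succ hk x

/-- Under the left regular representation `φ` of `F` in `Mₙ(G)` with respect to the left
`G`-basis `f_0 = 1, …, f_{n-1}`: `a ∈ S_k` iff the `(k+1) × (n-k-1)` upper-right block of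
`φ(a)` (rows `1,…,k+1`, columns `k+2,…,n`, one-indexed) is zero, and, for `1 ≤ k < n`,
`a ∈ D_k` iff the `k × (n-k-1)` upper-right block of `φ(a)` (rows `1,…,k`, columns
`k+2,…,n`) is zero. -/
theorem stmt18 {F : Type*} [DivisionRing F] (n : ℕ) (hn : 1 ≤ n)
    (G : Subring F) (hG : ∀ x ∈ G, x⁻¹ ∈ G)
    (f : ℕ → F) (hf0 : f 0 = 1)
    (hspan : ∀ x : F, ∃ c : ℕ → F, (∀ i, c i ∈ G) ∧ x = ∑ i ∈ Finset.range n, c i * f i)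
    (hindep : ∀ c : ℕ → F, (∀ i, c i ∈ G) →
      ∑ i ∈ Finset.range n, c i * f i = 0 → ∀ i < n, c i = 0)
    (φ : F → Matrix (Fin n) (Fin n) G)
    (hφ : ∀ (x : F) (i : Fin n), f (i : ℕ) * x = ∑ j : Fin n, (φ x i j : F) * f (j : ℕ)) :
    (∀ k : ℕ, k < n → ∀ x : F, x ∈ Sset G f k ↔
      ∀ i j : Fin n, (i : ℕ) ≤ k → k + 1 ≤ (j : ℕ) → φ x i j = 0) ∧
    (∀ k : ℕ, 1 ≤ k → k < n → ∀ x : F, x ∈ Dset G f k ↔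
      ∀ i j : Fin n, (i : ℕ) < k → k + 1 ≤ (j : ℕ) → φ x i j = 0) :=
  stmt18_general n G f hindep φ hφ
end

section
/- Let n be a positive integer, F₀, G₀, F, G division rings, ι_F : F₀ → F, ι_G : G₀ → G ring embeddings, and φ₀ : F₀ → Mₙ(G₀), φ : F → Mₙ(G) ring embeddings satisfying φ(ι_F(x)) = φ₀(x) with ι_G applied entrywise, for all x ∈ F₀. Suppose φ₀ is a-tight for some a ∈ {1, …, n}. Then the image of φ₀ equals the intersection of Mₙ(G₀) with the image of φ; precisely, if f ∈ F is such that every entry of φ(f) lies in the image of ι_G, then f = ι_F(x) for some x ∈ F₀. -/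
/-!
By tightness of `φ₀` there is `x ∈ F₀` with `φ₀ x` agreeing with the entries of `φ f` on the
upper-right `a × (n + 1 - a)` block, so `φ (f - ιF x)` vanishes there. Its first `a` rows then
live in the span of the first `a - 1` coordinate vectors, hence are linearly dependent, and the
matrix is not invertible. Since `φ` sends nonzero elements of the division ring `F` to units,
`f = ιF x`.
-/

open Function

theorem LinearIndependent.card_le_of_apply_eq_zero_off_range {ι κ m G : Type*} [DivisionRing G]
    [Fintype ι] [Fintype κ] {c : κ → m} (hc : Injective c) {v : ι → m → G}
    (hv : LinearIndependent G v) (hvc : ∀ i j, j ∉ Set.range c → v i j = 0) :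
    Fintype.card ι ≤ Fintype.card κ := by
  let restrict : (m → G) →ₗ[G] κ → G := LinearMap.funLeft G G c
  have hextend : ExtendByZero.linearMap G c ∘ restrict ∘ v = v := by
    funext i j
    by_cases hj : j ∈ Set.range c
    · obtain ⟨k, rfl⟩ := hj
      simp [restrict, hc.extend_apply]
    · rw [hvc i j hj]
      exact extend_apply' _ _ _ (by simpa using hj)
  rw [← hextend] at hv
  simpa using (hv.of_comp _).fintype_card_le_finrank

theorem Matrix.not_isUnit_of_rows_eq_zero_off_range {m ι κ G : Type*} [DivisionRing G]
    [Fintype m] [DecidableEq m] [Fintype ι] [Fintype κ] {A : Matrix m m G}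
    {r : ι → m} (hr : Injective r) {c : κ → m} (hc : Injective c)
    (hcard : Fintype.card κ < Fintype.card ι) (hA : ∀ i j, j ∉ Set.range c → A (r i) j = 0) :
    ¬ IsUnit A := fun hunit =>
  hcard.not_ge <|
    ((linearIndependent_rows_of_isUnit hunit).comp r hr).card_le_of_apply_eq_zero_off_range hc hA

theorem Matrix.not_isUnit_of_upperRightBlock_eq_zero {G : Type*} [DivisionRing G] {n a : ℕ}
    (ha : 1 ≤ a) (han : a ≤ n) {A : Matrix (Fin n) (Fin n) G}
    (hA : ∀ i j : Fin n, (i : ℕ) < a → a ≤ (j : ℕ) + 1 → A i j = 0) :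
    ¬ IsUnit A := by
  refine not_isUnit_of_rows_eq_zero_off_range (Fin.castLE_injective han)
    (Fin.castLE_injective (show a - 1 ≤ n by omega)) (by simp only [Fintype.card_fin]; omega)
    fun i j hj => ?_
  exact hA _ _ i.2 (not_lt.mp fun hja => hj ⟨⟨j, by omega⟩, rfl⟩)

theorem stmt19_general {F₀ G₀ F G : Type*}
    [DivisionRing F₀] [DivisionRing G₀] [DivisionRing F] [DivisionRing G]
    (n : ℕ)
    (ιF : F₀ →+* F) (ιG : G₀ →+* G)
    (φ₀ : F₀ →+* Matrix (Fin n) (Fin n) G₀)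
    (φ : F →+* Matrix (Fin n) (Fin n) G)
    (hcompat : ∀ x : F₀, φ (ιF x) = (φ₀ x).map ⇑ιG)
    (a : ℕ) (ha : 1 ≤ a) (han : a ≤ n)
    (htight : ATight (⇑φ₀) a) :
    ∀ f : F, (∀ i j : Fin n, φ f i j ∈ Set.range ιG) → ∃ x : F₀, f = ιF x := by
  intro f hf
  choose M hM using hf
  obtain ⟨x, hx⟩ := htight M
  refine ⟨x, of_not_not fun hne => ?_⟩
  have hblock : ∀ i j : Fin n, (i : ℕ) < a → a ≤ (j : ℕ) + 1 → φ (f - ιF x) i j = 0 := by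
    intro i j hi hj
    rw [map_sub, Matrix.sub_apply, hcompat, ← hM i j, Matrix.map_apply, hx i j hi hj, sub_self]
  exact Matrix.not_isUnit_of_upperRightBlock_eq_zero ha han hblock
    ((isUnit_iff_ne_zero.mpr (sub_ne_zero.mpr hne)).map φ)

/-- If `φ : F → Mₙ(G)` extends an `a`-tight embedding `φ₀ : F₀ → Mₙ(G₀)` along the
embeddings `ιF : F₀ → F`, `ιG : G₀ → G`, then the image of `φ₀` is exactly the
intersection of `Mₙ(G₀)` with the image of `φ`: any `f ∈ F` all of whose matrix entries
come from `G₀` lies in (the image of) `F₀`. -/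
theorem stmt19 {F₀ G₀ F G : Type*}
    [DivisionRing F₀] [DivisionRing G₀] [DivisionRing F] [DivisionRing G]
    (n : ℕ) (hn : 1 ≤ n)
    (ιF : F₀ →+* F) (ιG : G₀ →+* G)
    (hιF : Function.Injective ιF) (hιG : Function.Injective ιG)
    (φ₀ : F₀ →+* Matrix (Fin n) (Fin n) G₀) (hφ₀ : Function.Injective φ₀)
    (φ : F →+* Matrix (Fin n) (Fin n) G) (hφ : Function.Injective φ)
    (hcompat : ∀ x : F₀, φ (ιF x) = (φ₀ x).map ⇑ιG)
    (a : ℕ) (ha : 1 ≤ a) (han : a ≤ n)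
    (htight : ATight (⇑φ₀) a) :
    ∀ f : F, (∀ i j : Fin n, φ f i j ∈ Set.range ιG) → ∃ x : F₀, f = ιF x :=
  stmt19_general n ιF ιG φ₀ φ hcompat a ha han htight
end
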